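/- arXiv:0812.1200 — 3 statements merged into one kernel-verified Lean document; each statement's English description precedes it below -/
import Mathlib

section
/- Let S be a closed semialgebraic subset of S^k × S^ℓ and let π_Y : S → S^k denote the restriction to S of the projection of S^k × S^ℓ onto the first factor. Then for every p ≥ 0, the set D^p_{Y,c}(S) is homotopy equivalent to the (p+1)-fold join J^p_{π_Y}(S) of S over π_Y. -/
open CategoryTheory

noncomputable section SingularHomology

/-- The singular chain complex functor: singular simplicial set, followed by the free abelian
group functor applied levelwise, followed by the alternating face map complex. -/
def singularChains : TopCat.{0} ⥤ ChainComplex Ab ℕ :=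
  TopCat.toSSet ⋙ ((SimplicialObject.whiskering _ _).obj AddCommGrpCat.free) ⋙
    AlgebraicTopology.alternatingFaceMapComplex Ab

/-- Singular homology with integer coefficients, as a functor `TopCat ⥤ Ab`. -/
def SH (i : ℕ) : TopCat.{0} ⥤ Ab :=
  singularChains ⋙ HomologicalComplex.homologyFunctor Ab _ i

/-- The homomorphism induced on `i`-th singular homology by a continuous map. -/
def SHmap (i : ℕ) {X Y : Type} [TopologicalSpace X] [TopologicalSpace Y]
    (g : C(X, Y)) : (SH i).obj (TopCat.of X) ⟶ (SH i).obj (TopCat.of Y) :=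
  (SH i).map (TopCat.ofHom g : TopCat.of X ⟶ TopCat.of Y)

/-- The `i`-th Betti number of a topological space: the rank of its `i`-th singular
homology group with integer coefficients. -/
def betti (X : Type) [TopologicalSpace X] (i : ℕ) : ℕ :=
  Module.finrank ℤ ((SH i).obj (TopCat.of X))

/-- A continuous map is a `p`-equivalence if it induces isomorphisms on singular homology
in all degrees `i < p` and an epimorphism in degree `p`. -/
def IsPEquivalence (p : ℕ) {X Y : Type} [TopologicalSpace X] [TopologicalSpace Y]
    (g : C(X, Y)) : Prop :=
  (∀ i, i < p → Function.Bijective (SHmap i g)) ∧ Function.Surjective (SHmap p g)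

end SingularHomology

/-- Basic semialgebraic sets: zero sets and (strict) positivity sets of real polynomials. -/
def IsBasicSA {m : ℕ} (S : Set (Fin m → ℝ)) : Prop :=
  ∃ p : MvPolynomial (Fin m) ℝ,
    S = {x | MvPolynomial.eval x p = 0} ∨ S = {x | 0 < MvPolynomial.eval x p}

/-- A set is semialgebraic if it is a finite union of finite intersections of basic
semialgebraic sets. -/
def IsSemialgebraic {m : ℕ} (S : Set (Fin m → ℝ)) : Prop :=
  ∃ (N M : ℕ) (B : Fin N → Fin M → Set (Fin m → ℝ)),
    (∀ i j, IsBasicSA (B i j)) ∧ S = ⋃ i, ⋂ j, B i j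

/-- A semialgebraic compact: a closed and bounded semialgebraic set. -/
def IsSACompact {m : ℕ} (S : Set (Fin m → ℝ)) : Prop :=
  IsSemialgebraic S ∧ IsClosed S ∧ Bornology.IsBounded S

/-- A subset of a product `ℝ^a × ℝ^b` is semialgebraic if the corresponding subset of
`ℝ^{a+b}` is. -/
def IsSemialgebraicPair {a b : ℕ} (S : Set ((Fin a → ℝ) × (Fin b → ℝ))) : Prop :=
  IsSemialgebraic {z : Fin (a + b) → ℝ | ∃ w ∈ S, z = Fin.append w.1 w.2}

/-- A semialgebraic compact in a product `ℝ^a × ℝ^b`. -/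
def IsSACompactPair {a b : ℕ} (S : Set ((Fin a → ℝ) × (Fin b → ℝ))) : Prop :=
  IsSemialgebraicPair S ∧ IsClosed S ∧ Bornology.IsBounded S

/-- A subset of a triple product `ℝ^a × ℝ^b × ℝ^c` is semialgebraic if the corresponding
subset of `ℝ^{a+b+c}` is. -/
def IsSemialgebraicTriple {a b c : ℕ}
    (S : Set ((Fin a → ℝ) × (Fin b → ℝ) × (Fin c → ℝ))) : Prop :=
  IsSemialgebraic {z : Fin (a + b + c) → ℝ | ∃ w ∈ S, z = Fin.append (Fin.append w.1 w.2.1) w.2.2}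

/-- A map `f : A → ℝ^b`, `A ⊆ ℝ^a`, is semialgebraic if its graph over `A` is a
semialgebraic subset of `ℝ^{a+b}`. -/
def IsSemialgebraicMapOn {a b : ℕ} (A : Set (Fin a → ℝ)) (f : (Fin a → ℝ) → (Fin b → ℝ)) : Prop :=
  IsSemialgebraic {z : Fin (a + b) → ℝ | ∃ x ∈ A, z = Fin.append x (f x)}

/-- The unit sphere `S^n ⊆ ℝ^{n+1}`. -/
def unitSphere (n : ℕ) : Set (Fin (n + 1) → ℝ) := {x | ∑ i, x i ^ 2 = 1}

/-- The standard `p`-simplex `Δ^p ⊆ ℝ^{p+1}`. -/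
def simplexΔ (p : ℕ) : Set (Fin (p + 1) → ℝ) := {t | (∀ i, 0 ≤ t i) ∧ ∑ i, t i = 1}

section Join

variable {X : Type} [TopologicalSpace X] (p : ℕ)

/-- The relation defining the `(p+1)`-fold join: `(x,t) ∼ (x',t')` iff `t = t'` and
`x i = x' i` for every `i` with `t i ≠ 0`. -/
def joinRel (a b : (Fin (p + 1) → X) × (simplexΔ p)) : Prop :=
  a.2 = b.2 ∧ ∀ i, (a.2 : Fin (p + 1) → ℝ) i ≠ 0 → a.1 i = b.1 i

/-- The `(p+1)`-fold join `J^p(X)`, with the quotient topology. -/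
def IteratedJoin (X : Type) [TopologicalSpace X] (p : ℕ) : Type :=
  Quot (joinRel (X := X) p)

instance : TopologicalSpace (IteratedJoin X p) :=
  inferInstanceAs (TopologicalSpace (Quot _))

end Join

section JoinOverMap

variable {α β : Type} (A : Set α) (f : α → β) (p : ℕ)

/-- The `(p+1)`-fold fiber product `W^p_f(A)` of `A` over `f`. -/
def fiberW : Set (Fin (p + 1) → α) :=
  {x | (∀ i, x i ∈ A) ∧ ∀ i, f (x i) = f (x 0)}

/-- The relation defining the `(p+1)`-fold join over a map. -/
def joinOverRel (a b : (fiberW A f p) × (simplexΔ p)) : Prop :=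
  a.2 = b.2 ∧ ∀ i, (a.2 : Fin (p + 1) → ℝ) i ≠ 0 → a.1.1 i = b.1.1 i

/-- The `(p+1)`-fold join `J^p_f(A)` of `A` over `f`, with the quotient topology. -/
def JoinOverMap : Type _ :=
  Quot (joinOverRel A f p)

instance [TopologicalSpace α] : TopologicalSpace (JoinOverMap A f p) :=
  inferInstanceAs (TopologicalSpace (Quot _))

/-- The map `J(f) : J^p_f(A) → β`, sending the class of `(x₀,…,x_p,t)` to `f x₀`. -/
def joinMap : JoinOverMap A f p → β :=
  Quot.lift (fun a => f (a.1.1 0)) (by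
    rintro ⟨x, t⟩ ⟨y, s⟩ ⟨h1, h2⟩
    obtain ⟨i, hi⟩ : ∃ i, (t : Fin (p + 1) → ℝ) i ≠ 0 := by
      by_contra h
      push_neg at h
      have := t.2.2
      simp [h] at this
    have hx := x.2.2 i
    have hy := y.2.2 i
    dsimp only
    rw [← hx, h2 i hi, hy])

/-- The map `J(f)`, as a continuous map onto the image `f(A)`. -/
noncomputable def joinMapCM [TopologicalSpace α] [TopologicalSpace β]
    (hf : ContinuousOn f A) : C(JoinOverMap A f p, ↥(f '' A)) where
  toFun := Quot.lift
    (fun a => (⟨f (a.1.1 0), a.1.1 0, a.1.2.1 0, rfl⟩ : ↥(f '' A)))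
    (by
      rintro ⟨x, t⟩ ⟨y, s⟩ ⟨h1, h2⟩
      obtain ⟨i, hi⟩ : ∃ i, (t : Fin (p + 1) → ℝ) i ≠ 0 := by
        by_contra h
        push_neg at h
        have := t.2.2
        simp [h] at this
      apply Subtype.ext
      have hx := x.2.2 i
      have hy := y.2.2 i
      dsimp only
      rw [← hx, h2 i hi, hy])
  continuous_toFun := by
    apply continuous_quot_lift
    apply Continuous.subtype_mk
    have h0 : Continuous (fun a : (fiberW A f p) × (simplexΔ p) =>
        (⟨a.1.1 0, a.1.2.1 0⟩ : ↥A)) :=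
      Continuous.subtype_mk ((continuous_apply 0).comp
        (continuous_subtype_val.comp continuous_fst)) _
    exact hf.restrict.comp h0

end JoinOverMap

/-- The semialgebraic set `D^p_{Y,c}(S)` associated to a closed semialgebraic subset
`S ⊆ S^k × S^ℓ`: tuples `(u, x, y⁰, …, y^p, t)` with `|x| = 1`, `t ∈ Δ^p`, `|yⁱ| ≤ 1`,
for each `i` either `t_i = 0` or `(x, yⁱ) ∈ S`, `u ≥ 0`, and
`u² + |x|² + Σ|yⁱ|² + |t|² = p + 4`. -/
def Dc (k l p : ℕ) (S : Set ((Fin (k + 1) → ℝ) × (Fin (l + 1) → ℝ))) :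
    Set (ℝ × (Fin (k + 1) → ℝ) × (Fin (p + 1) → Fin (l + 1) → ℝ) × (Fin (p + 1) → ℝ)) :=
  {w | w.2.1 ∈ unitSphere k ∧ w.2.2.2 ∈ simplexΔ p ∧
    (∀ i, ∑ j, w.2.2.1 i j ^ 2 ≤ 1) ∧
    (∀ i, w.2.2.2 i = 0 ∨ (w.2.1, w.2.2.1 i) ∈ S) ∧
    0 ≤ w.1 ∧
    w.1 ^ 2 + (∑ j, w.2.1 j ^ 2) + (∑ i, ∑ j, w.2.2.1 i j ^ 2) + (∑ i, w.2.2.2 i ^ 2)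
      = (p : ℝ) + 4}

namespace DJP


noncomputable def eps (p : ℕ) : ℝ := (2 * ((p : ℝ) + 1))⁻¹

lemma eps_pos (p : ℕ) : 0 < eps p := by
  have : (0:ℝ) < 2 * ((p:ℝ)+1) := by positivity
  exact inv_pos.mpr this

noncomputable def mm (p : ℕ) (a : ℝ) : ℝ := min 1 (a / eps p)

lemma continuous_mm (p : ℕ) : Continuous (mm p) :=
  continuous_const.min (continuous_id.div_const _)

lemma mm_nonneg (p : ℕ) {a : ℝ} (ha : 0 ≤ a) : 0 ≤ mm p a :=
  le_min zero_le_one (div_nonneg ha (eps_pos p).le)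

lemma mm_le_one (p : ℕ) (a : ℝ) : mm p a ≤ 1 := min_le_left _ _

lemma mm_zero (p : ℕ) : mm p 0 = 0 := by simp [mm]

lemma mm_pos (p : ℕ) {a : ℝ} (ha : 0 < a) : 0 < mm p a :=
  lt_min one_pos (div_pos ha (eps_pos p))

lemma mm_of_big (p : ℕ) {a : ℝ} (ha : eps p < a) : mm p a = 1 := by
  have : 1 < a / eps p := (one_lt_div (eps_pos p)).mpr ha
  exact min_eq_left this.le

/-- the shrinking coefficient for the `E`-side homotopy -/
noncomputable def ff (p : ℕ) (s a : ℝ) : ℝ := 1 - max (s - a / eps p) 0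

lemma ff_zero (p : ℕ) {a : ℝ} (ha : 0 ≤ a) : ff p 0 a = 1 := by
  have hd : 0 ≤ a / eps p := div_nonneg ha (eps_pos p).le
  unfold ff
  rw [zero_sub, max_eq_right (neg_nonpos.mpr hd)]
  ring

lemma ff_one (p : ℕ) (a : ℝ) : ff p 1 a = mm p a := by
  rcases le_total (a / eps p) 1 with h | h
  · rw [ff, mm, max_eq_left (by linarith), min_eq_right h]; ring
  · rw [ff, mm, max_eq_right (by linarith), min_eq_left h]; ring

lemma ff_of_big (p : ℕ) {s a : ℝ} (hs : s * eps p < a) : ff p s a = 1 := by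
  have h : s < a / eps p := (lt_div_iff₀ (eps_pos p)).mpr hs
  simp [ff, max_eq_right (by linarith : s - a / eps p ≤ 0)]

lemma ff_nonneg (p : ℕ) {s a : ℝ} (hs0 : 0 ≤ s) (hs : s ≤ 1) (ha : 0 ≤ a) : 0 ≤ ff p s a := by
  have hd : 0 ≤ a / eps p := div_nonneg ha (eps_pos p).le
  have h1 : max (s - a / eps p) 0 ≤ s := max_le (by linarith) hs0
  unfold ff; linarith

lemma ff_le_one (p : ℕ) (s a : ℝ) : ff p s a ≤ 1 := by
  have := le_max_right (s - a / eps p) 0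
  unfold ff; linarith

lemma continuous_ff (p : ℕ) : Continuous fun q : ℝ × ℝ => ff p q.1 q.2 :=
  continuous_const.sub (((continuous_fst).sub ((continuous_snd).div_const _)).max continuous_const)

/-- the deformed simplex point -/
noncomputable def tsh (p : ℕ) (s : ℝ) (t : Fin (p + 1) → ℝ) : Fin (p + 1) → ℝ :=
  fun i => max (t i - s * eps p) 0 / ∑ j, max (t j - s * eps p) 0

lemma simplex_exists_big {p : ℕ} {t : Fin (p+1) → ℝ} (ht : t ∈ simplexΔ p) :
    ∃ j, 2 * eps p ≤ t j := by
  by_contra h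
  push_neg at h
  have hsum : ∑ j, t j < ∑ _j : Fin (p+1), 2 * eps p :=
    Finset.sum_lt_sum_of_nonempty Finset.univ_nonempty (fun j _ => h j)
  rw [ht.2, Finset.sum_const, Finset.card_univ, Fintype.card_fin] at hsum
  have : 2 * eps p = ((p:ℝ)+1)⁻¹ := by
    rw [eps]
    field_simp
  rw [this] at hsum
  have hp : (0:ℝ) < (p:ℝ)+1 := by positivity
  rw [nsmul_eq_mul] at hsum
  push_cast at hsum
  rw [mul_inv_cancel₀ hp.ne'] at hsum
  exact lt_irrefl 1 hsum

lemma Nsum_pos {p : ℕ} {s : ℝ} {t : Fin (p+1) → ℝ} (ht : t ∈ simplexΔ p)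
    (hs1 : s ≤ 1) : eps p ≤ ∑ j, max (t j - s * eps p) 0 := by
  obtain ⟨j, hj⟩ := simplex_exists_big ht
  have h1 : eps p ≤ max (t j - s * eps p) 0 := by
    have : s * eps p ≤ eps p := by
      nlinarith [eps_pos p]
    have : eps p ≤ t j - s * eps p := by linarith
    exact le_trans this (le_max_left _ _)
  calc eps p ≤ max (t j - s * eps p) 0 := h1
    _ ≤ ∑ j, max (t j - s * eps p) 0 :=
      Finset.single_le_sum (f := fun j => max (t j - s * eps p) 0)
        (fun i _ => le_max_right _ _) (Finset.mem_univ j)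

lemma Nsum_ne {p : ℕ} {s : ℝ} {t : Fin (p+1) → ℝ} (ht : t ∈ simplexΔ p)
    (hs1 : s ≤ 1) : (∑ j, max (t j - s * eps p) 0) ≠ 0 :=
  (lt_of_lt_of_le (eps_pos p) (Nsum_pos ht hs1)).ne'

lemma tsh_mem {p : ℕ} {s : ℝ} {t : Fin (p+1) → ℝ} (ht : t ∈ simplexΔ p)
    (hs1 : s ≤ 1) : tsh p s t ∈ simplexΔ p := by
  constructor
  · intro i
    exact div_nonneg (le_max_right _ 0)
      (le_trans (eps_pos p).le (Nsum_pos ht hs1))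
  · unfold tsh
    rw [← Finset.sum_div]
    exact div_self (Nsum_ne ht hs1)

lemma tsh_zero {p : ℕ} {t : Fin (p+1) → ℝ} (ht : t ∈ simplexΔ p) : tsh p 0 t = t := by
  funext i
  have h : ∀ j, max (t j - 0 * eps p) 0 = t j := by
    intro j; rw [zero_mul, sub_zero, max_eq_left (ht.1 j)]
  simp only [tsh, h, ht.2, div_one]

lemma tsh_ne_imp {p : ℕ} {s : ℝ} {t : Fin (p+1) → ℝ} {i : Fin (p+1)}
    (h : tsh p s t i ≠ 0) : s * eps p < t i := by
  by_contra hc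
  push_neg at hc
  apply h
  unfold tsh
  rw [max_eq_right (by linarith), zero_div]

lemma tsh_pos_imp {p : ℕ} {s : ℝ} {t : Fin (p+1) → ℝ} {i : Fin (p+1)}
    (hs : 0 ≤ s) (h : tsh p s t i ≠ 0) : 0 < t i :=
  lt_of_le_of_lt (mul_nonneg hs (eps_pos p).le) (tsh_ne_imp h)

lemma tsh_eq_zero {p : ℕ} {s : ℝ} {t : Fin (p+1) → ℝ} {i : Fin (p+1)}
    (hs : 0 ≤ s) (h : t i = 0) : tsh p s t i = 0 := by
  unfold tsh
  have : 0 ≤ s * eps p := mul_nonneg hs (eps_pos p).le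
  rw [h, max_eq_right (by linarith), zero_div]

lemma continuous_tsh {p : ℕ} {X : Type*} [TopologicalSpace X] {s : X → ℝ}
    {t : X → Fin (p+1) → ℝ} (hs : Continuous s) (ht : Continuous t)
    (hmem : ∀ x, t x ∈ simplexΔ p) (hs1 : ∀ x, s x ≤ 1) :
    Continuous fun x => tsh p (s x) (t x) := by
  apply continuous_pi
  intro i
  apply Continuous.div
  · exact (((continuous_apply i).comp ht).sub (hs.mul continuous_const)).max continuous_const
  · apply continuous_finset_sum
    intro j _
    exact (((continuous_apply j).comp ht).sub (hs.mul continuous_const)).max continuous_const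
  · intro x
    exact Nsum_ne (hmem x) (hs1 x)



variable {k l p : ℕ} {S : Set ((Fin (k + 1) → ℝ) × (Fin (l + 1) → ℝ))}

lemma simplex_exists_ne {p : ℕ} {t : Fin (p+1) → ℝ} (ht : t ∈ simplexΔ p) :
    ∃ j, t j ≠ 0 := by
  by_contra h
  push_neg at h
  have : ∑ i, t i = 0 := Finset.sum_eq_zero fun i _ => h i
  rw [ht.2] at this
  exact one_ne_zero this

lemma unitSphere_bounded (n : ℕ) : Bornology.IsBounded (unitSphere n) := by
  apply (Metric.isBounded_closedBall (x := (0 : Fin (n+1) → ℝ)) (r := 1)).subset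
  intro x hx
  have hx' : ∑ i, x i ^ 2 = 1 := hx
  rw [Metric.mem_closedBall, dist_zero_right, pi_norm_le_iff_of_nonneg zero_le_one]
  intro i
  rw [Real.norm_eq_abs, abs_le_one_iff_mul_self_le_one]
  have h1 : x i ^ 2 ≤ 1 := by
    have := Finset.single_le_sum (f := fun j => x j ^ 2) (fun j _ => sq_nonneg _)
      (Finset.mem_univ i)
    rw [hx'] at this
    exact this
  nlinarith [h1]

lemma sphere_norm_sq {n : ℕ} {x : Fin (n+1) → ℝ} (hx : x ∈ unitSphere n) :
    ∑ i, x i ^ 2 = 1 := hx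

lemma isCompact_S (hsub : S ⊆ (unitSphere k) ×ˢ (unitSphere l)) (hcl : IsClosed S) :
    IsCompact S :=
  Metric.isCompact_of_isClosed_isBounded hcl
    (((unitSphere_bounded k).prod (unitSphere_bounded l)).subset hsub)

lemma isClosed_fiberW (hcl : IsClosed S) : IsClosed (fiberW S Prod.fst p) := by
  have hrw : fiberW S Prod.fst p =
      (⋂ i, {x : Fin (p+1) → ((Fin (k + 1) → ℝ) × (Fin (l + 1) → ℝ)) | x i ∈ S}) ∩
      ⋂ i, {x | (x i).1 = (x 0).1} := by
    ext x
    simp [fiberW, Set.mem_iInter, Set.mem_inter_iff]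
  rw [hrw]
  exact IsClosed.inter (isClosed_iInter fun i => hcl.preimage (continuous_apply i))
    (isClosed_iInter fun i => isClosed_eq (continuous_fst.comp (continuous_apply i))
      (continuous_fst.comp (continuous_apply 0)))

lemma isCompact_fiberW (hsub : S ⊆ (unitSphere k) ×ˢ (unitSphere l)) (hcl : IsClosed S) :
    IsCompact (fiberW S Prod.fst p) :=
  IsCompact.of_isClosed_subset (isCompact_univ_pi fun _ : Fin (p+1) => isCompact_S hsub hcl)
    (isClosed_fiberW hcl) (fun x hx => Set.mem_univ_pi.mpr fun i => hx.1 i)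

lemma isClosed_simplex (p : ℕ) : IsClosed (simplexΔ p) := by
  have hrw : simplexΔ p = (⋂ i, {t : Fin (p+1) → ℝ | 0 ≤ t i}) ∩ {t | ∑ i, t i = 1} := by
    ext t; simp [simplexΔ, Set.mem_iInter]
  rw [hrw]
  exact (isClosed_iInter fun i => isClosed_le continuous_const (continuous_apply i)).inter
    (isClosed_eq (continuous_finset_sum _ fun i _ => continuous_apply i) continuous_const)

lemma isCompact_simplex (p : ℕ) : IsCompact (simplexΔ p) := by
  apply Metric.isCompact_of_isClosed_isBounded (isClosed_simplex p)
  apply (Metric.isBounded_closedBall (x := (0 : Fin (p+1) → ℝ)) (r := 1)).subset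
  rintro t ⟨h0, h1⟩
  rw [Metric.mem_closedBall, dist_zero_right, pi_norm_le_iff_of_nonneg zero_le_one]
  intro i
  rw [Real.norm_eq_abs, abs_le]
  have hle : t i ≤ 1 := by
    have := Finset.single_le_sum (f := t) (fun j _ => h0 j) (Finset.mem_univ i)
    rw [h1] at this
    exact this
  exact ⟨by linarith [h0 i], hle⟩

/-- The parametrization of the geometric model of the join. -/
noncomputable def mu (S : Set ((Fin (k + 1) → ℝ) × (Fin (l + 1) → ℝ))) (p : ℕ) :
    (↥(fiberW S Prod.fst p) × ↥(simplexΔ p)) →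
      ((Fin (k + 1) → ℝ) × (Fin (p + 1) → Fin (l + 1) → ℝ) × (Fin (p + 1) → ℝ)) :=
  fun a => ((a.1.1 0).1, fun i => mm p ((a.2 : Fin (p+1) → ℝ) i) • (a.1.1 i).2,
    (a.2 : Fin (p+1) → ℝ))

lemma continuous_mu (S : Set ((Fin (k + 1) → ℝ) × (Fin (l + 1) → ℝ))) (p : ℕ) :
    Continuous (mu S p) := by
  refine Continuous.prodMk ?_ (Continuous.prodMk ?_ ?_)
  · exact continuous_fst.comp ((continuous_apply 0).comp
      (continuous_subtype_val.comp continuous_fst))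
  · apply continuous_pi; intro i
    exact ((continuous_mm p).comp ((continuous_apply i).comp
        (continuous_subtype_val.comp continuous_snd))).smul
      (continuous_snd.comp ((continuous_apply i).comp
        (continuous_subtype_val.comp continuous_fst)))
  · exact continuous_subtype_val.comp continuous_snd

/-- The geometric model for the join. -/
noncomputable def Gset (S : Set ((Fin (k + 1) → ℝ) × (Fin (l + 1) → ℝ))) (p : ℕ) :
    Set ((Fin (k + 1) → ℝ) × (Fin (p + 1) → Fin (l + 1) → ℝ) × (Fin (p + 1) → ℝ)) :=
  Set.range (mu S p)

lemma mu_sound {a b : ↥(fiberW S Prod.fst p) × ↥(simplexΔ p)}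
    (h : joinOverRel S Prod.fst p a b) : mu S p a = mu S p b := by
  obtain ⟨h1, h2⟩ := h
  obtain ⟨j, hj⟩ := simplex_exists_ne a.2.2
  refine Prod.ext ?_ (Prod.ext ?_ ?_)
  · show (a.1.1 0).1 = (b.1.1 0).1
    rw [← a.1.2.2 j, ← b.1.2.2 j, h2 j hj]
  · funext i
    show mm p ((a.2 : Fin (p+1) → ℝ) i) • (a.1.1 i).2
        = mm p ((b.2 : Fin (p+1) → ℝ) i) • (b.1.1 i).2
    rw [← h1]
    by_cases hti : (a.2 : Fin (p+1) → ℝ) i = 0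
    · rw [hti, mm_zero, zero_smul, zero_smul]
    · rw [h2 i hti]
  · show (a.2 : Fin (p+1) → ℝ) = (b.2 : Fin (p+1) → ℝ)
    rw [h1]

/-- The canonical map from the join to the geometric model. -/
noncomputable def liftfn (S : Set ((Fin (k + 1) → ℝ) × (Fin (l + 1) → ℝ))) (p : ℕ) :
    JoinOverMap S Prod.fst p → ↥(Gset S p) :=
  Quot.lift (fun a => (⟨mu S p a, Set.mem_range_self a⟩ : ↥(Gset S p)))
    (fun a b h => Subtype.ext (mu_sound h))

lemma liftfn_injective : Function.Injective (liftfn S p) := by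
  intro u v
  induction u using Quot.ind with | _ a => ?_
  induction v using Quot.ind with | _ b => ?_
  intro h
  have h' : mu S p a = mu S p b := congrArg Subtype.val h
  apply Quot.sound
  have ht : (a.2 : Fin (p+1) → ℝ) = (b.2 : Fin (p+1) → ℝ) := congrArg (fun w => w.2.2) h'
  refine ⟨Subtype.ext ht, fun i hi => ?_⟩
  have h2 : mm p ((a.2 : Fin (p+1) → ℝ) i) • (a.1.1 i).2
      = mm p ((b.2 : Fin (p+1) → ℝ) i) • (b.1.1 i).2 :=
    congrFun (congrArg (fun w => w.2.1) h') i
  have hpos : 0 < (a.2 : Fin (p+1) → ℝ) i := lt_of_le_of_ne (a.2.2.1 i) (Ne.symm hi)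
  have hmm : mm p ((a.2 : Fin (p+1) → ℝ) i) ≠ 0 := (mm_pos p hpos).ne'
  rw [← ht] at h2
  refine Prod.ext ?_ ?_
  · show (a.1.1 i).1 = (b.1.1 i).1
    have hx : (a.1.1 0).1 = (b.1.1 0).1 := congrArg (fun w => w.1) h'
    rw [a.1.2.2 i, b.1.2.2 i, hx]
  · exact smul_right_injective (Fin (l+1) → ℝ) hmm h2

lemma liftfn_surjective : Function.Surjective (liftfn S p) := by
  rintro ⟨w, a, rfl⟩
  exact ⟨Quot.mk _ a, rfl⟩

lemma liftfn_continuous : Continuous (liftfn S p) :=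
  continuous_quot_lift _ ((continuous_mu S p).subtype_mk _)

/-- The join is homeomorphic to the geometric model. -/
noncomputable def homeoJG (hsub : S ⊆ (unitSphere k) ×ˢ (unitSphere l)) (hcl : IsClosed S)
    (p : ℕ) : JoinOverMap S Prod.fst p ≃ₜ ↥(Gset S p) := by
  haveI : CompactSpace ↥(fiberW S Prod.fst p) :=
    isCompact_iff_compactSpace.mp (isCompact_fiberW hsub hcl)
  haveI : CompactSpace ↥(simplexΔ p) := isCompact_iff_compactSpace.mp (isCompact_simplex p)
  haveI : CompactSpace (JoinOverMap S Prod.fst p) := by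
    constructor
    have hrw : (Set.univ : Set (JoinOverMap S Prod.fst p)) = Quot.mk _ '' Set.univ := by
      ext x
      refine ⟨fun _ => ?_, fun _ => trivial⟩
      obtain ⟨a, rfl⟩ := Quot.exists_rep x
      exact ⟨a, trivial, rfl⟩
    rw [hrw]
    exact isCompact_univ.image continuous_quot_mk
  exact Continuous.homeoOfEquivCompactToT2
    (f := Equiv.ofBijective _ ⟨liftfn_injective, liftfn_surjective⟩) (liftfn_continuous)

/-- The model of `Dc` without the redundant `u`-coordinate. -/
def Eset (k l p : ℕ) (S : Set ((Fin (k + 1) → ℝ) × (Fin (l + 1) → ℝ))) :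
    Set ((Fin (k + 1) → ℝ) × (Fin (p + 1) → Fin (l + 1) → ℝ) × (Fin (p + 1) → ℝ)) :=
  {w | w.1 ∈ unitSphere k ∧ w.2.2 ∈ simplexΔ p ∧ (∀ i, ∑ j, w.2.1 i j ^ 2 ≤ 1) ∧
    ∀ i, w.2.2 i = 0 ∨ (w.1, w.2.1 i) ∈ S}

lemma Dc_aux {w : (Fin (k + 1) → ℝ) × (Fin (p + 1) → Fin (l + 1) → ℝ) × (Fin (p + 1) → ℝ)}
    (hw : w ∈ Eset k l p S) :
    0 ≤ ((p : ℝ) + 4) -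
      ((∑ j, w.1 j ^ 2) + (∑ i, ∑ j, w.2.1 i j ^ 2) + (∑ i, w.2.2 i ^ 2)) := by
  obtain ⟨hx, ⟨ht0, ht1⟩, hb, -⟩ := hw
  have h1 : ∑ j, w.1 j ^ 2 = 1 := hx
  have h2 : ∑ i, ∑ j, w.2.1 i j ^ 2 ≤ (p : ℝ) + 1 := by
    calc ∑ i, ∑ j, w.2.1 i j ^ 2 ≤ ∑ _i : Fin (p+1), (1:ℝ) :=
          Finset.sum_le_sum fun i _ => hb i
      _ = (p:ℝ) + 1 := by
          rw [Finset.sum_const, Finset.card_univ, Fintype.card_fin, nsmul_eq_mul, mul_one]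
          push_cast; ring
  have h3 : ∑ i, w.2.2 i ^ 2 ≤ 1 := by
    have hle : ∀ i, w.2.2 i ^ 2 ≤ w.2.2 i := by
      intro i
      have h4 : w.2.2 i ≤ 1 := by
        have := Finset.single_le_sum (f := w.2.2) (fun j _ => ht0 j) (Finset.mem_univ i)
        rw [ht1] at this; exact this
      nlinarith [ht0 i]
    calc ∑ i, w.2.2 i ^ 2 ≤ ∑ i, w.2.2 i := Finset.sum_le_sum fun i _ => hle i
      _ = 1 := ht1
  linarith

/-- Dropping the `u`-coordinate is a homeomorphism from `Dc` to `Eset`. -/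
noncomputable def homeoDcE (k l p : ℕ) (S : Set ((Fin (k + 1) → ℝ) × (Fin (l + 1) → ℝ))) :
    ↥(Dc k l p S) ≃ₜ ↥(Eset k l p S) where
  toFun w := ⟨w.1.2, by
    obtain ⟨h1, h2, h3, h4, -⟩ := w.2
    exact ⟨h1, h2, h3, h4⟩⟩
  invFun w := ⟨(Real.sqrt (((p : ℝ) + 4) -
      ((∑ j, w.1.1 j ^ 2) + (∑ i, ∑ j, w.1.2.1 i j ^ 2) + (∑ i, w.1.2.2 i ^ 2))), w.1), by
    obtain ⟨h1, h2, h3, h4⟩ := w.2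
    refine ⟨h1, h2, h3, h4, Real.sqrt_nonneg _, ?_⟩
    show Real.sqrt (((p : ℝ) + 4) -
        ((∑ j, w.1.1 j ^ 2) + (∑ i, ∑ j, w.1.2.1 i j ^ 2) + (∑ i, w.1.2.2 i ^ 2))) ^ 2
      + (∑ j, w.1.1 j ^ 2) + (∑ i, ∑ j, w.1.2.1 i j ^ 2) + (∑ i, w.1.2.2 i ^ 2) = (p:ℝ) + 4
    rw [Real.sq_sqrt (Dc_aux w.2)]
    ring⟩
  left_inv w := by
    apply Subtype.ext
    obtain ⟨h1, h2, h3, h4, h5, h6⟩ := w.2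
    refine Prod.ext ?_ rfl
    show Real.sqrt _ = w.1.1
    have he : ((p : ℝ) + 4) - ((∑ j, w.1.2.1 j ^ 2) + (∑ i, ∑ j, w.1.2.2.1 i j ^ 2)
        + (∑ i, w.1.2.2.2 i ^ 2)) = w.1.1 ^ 2 := by linarith
    rw [he, Real.sqrt_sq h5]
  right_inv w := by apply Subtype.ext; rfl
  continuous_toFun := by
    apply Continuous.subtype_mk
    exact continuous_snd.comp continuous_subtype_val
  continuous_invFun := by
    apply Continuous.subtype_mk
    have c1 : Continuous fun w : ↥(Eset k l p S) => ∑ j, w.1.1 j ^ 2 :=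
      continuous_finset_sum _ fun j _ =>
        ((continuous_apply j).comp (continuous_fst.comp continuous_subtype_val)).pow 2
    have c2 : Continuous fun w : ↥(Eset k l p S) => ∑ i, ∑ j, w.1.2.1 i j ^ 2 :=
      continuous_finset_sum _ fun i _ => continuous_finset_sum _ fun j _ =>
        ((continuous_apply j).comp ((continuous_apply i).comp
          (continuous_fst.comp (continuous_snd.comp continuous_subtype_val)))).pow 2
    have c3 : Continuous fun w : ↥(Eset k l p S) => ∑ i, w.1.2.2 i ^ 2 :=
      continuous_finset_sum _ fun i _ =>
        ((continuous_apply i).comp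
          (continuous_snd.comp (continuous_snd.comp continuous_subtype_val))).pow 2
    exact (Real.continuous_sqrt.comp
      (continuous_const.sub ((c1.add c2).add c3))).prodMk continuous_subtype_val

lemma Gset_t_mem {w : (Fin (k + 1) → ℝ) × (Fin (p + 1) → Fin (l + 1) → ℝ) × (Fin (p + 1) → ℝ)}
    (hw : w ∈ Gset S p) : w.2.2 ∈ simplexΔ p := by
  obtain ⟨a, rfl⟩ := hw
  exact a.2.2

/-- From the ball model to the geometric model. -/
noncomputable def gam (k l p : ℕ) (S : Set ((Fin (k + 1) → ℝ) × (Fin (l + 1) → ℝ))) :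
    C(↥(Eset k l p S), ↥(Gset S p)) where
  toFun e := ⟨(e.1.1, fun i => mm p (e.1.2.2 i) • e.1.2.1 i, e.1.2.2), by
    obtain ⟨hx, ht, hb, hf⟩ := e.2
    obtain ⟨j, hj⟩ := simplex_exists_ne ht
    classical
    set z : Fin (p+1) → ((Fin (k + 1) → ℝ) × (Fin (l + 1) → ℝ)) :=
      fun i => if e.1.2.2 i = 0 then (e.1.1, e.1.2.1 j) else (e.1.1, e.1.2.1 i) with hz
    have hz1 : ∀ i, (z i).1 = e.1.1 := by
      intro i; by_cases h : e.1.2.2 i = 0 <;> simp [hz, h]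
    have hzS : ∀ i, z i ∈ S := by
      intro i
      by_cases h : e.1.2.2 i = 0
      · simp only [hz, if_pos h]
        exact (hf j).resolve_left hj
      · simp only [hz, if_neg h]
        exact (hf i).resolve_left h
    refine ⟨(⟨z, hzS, fun i => ?_⟩, ⟨e.1.2.2, ht⟩), ?_⟩
    · show (z i).1 = (z 0).1
      rw [hz1 i, hz1 0]
    · refine Prod.ext ?_ (Prod.ext ?_ rfl)
      · exact hz1 0
      · funext i
        show mm p (e.1.2.2 i) • (z i).2 = mm p (e.1.2.2 i) • e.1.2.1 i
        by_cases h : e.1.2.2 i = 0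
        · rw [h, mm_zero, zero_smul, zero_smul]
        · simp only [hz, if_neg h]⟩
  continuous_toFun := by
    apply Continuous.subtype_mk
    refine Continuous.prodMk ?_ (Continuous.prodMk ?_ ?_)
    · exact continuous_fst.comp continuous_subtype_val
    · apply continuous_pi; intro i
      exact ((continuous_mm p).comp ((continuous_apply i).comp
          (continuous_snd.comp (continuous_snd.comp continuous_subtype_val)))).smul
        ((continuous_apply i).comp
          (continuous_fst.comp (continuous_snd.comp continuous_subtype_val)))
    · exact continuous_snd.comp (continuous_snd.comp continuous_subtype_val)

/-- From the geometric model back to the ball model. -/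
noncomputable def del (k l p : ℕ) {S : Set ((Fin (k + 1) → ℝ) × (Fin (l + 1) → ℝ))}
    (hsub : S ⊆ (unitSphere k) ×ˢ (unitSphere l)) :
    C(↥(Gset S p), ↥(Eset k l p S)) where
  toFun g := ⟨(g.1.1, g.1.2.1, tsh p 1 g.1.2.2), by
    obtain ⟨a, ha⟩ := g.2
    have hx : g.1.1 = (a.1.1 0).1 := by rw [← ha]; rfl
    have hv : ∀ i, g.1.2.1 i = mm p ((a.2 : Fin (p+1) → ℝ) i) • (a.1.1 i).2 := by
      intro i; rw [← ha]; rfl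
    have hts : g.1.2.2 = (a.2 : Fin (p+1) → ℝ) := by rw [← ha]; rfl
    have htmem : g.1.2.2 ∈ simplexΔ p := by rw [hts]; exact a.2.2
    refine ⟨?_, tsh_mem htmem le_rfl, ?_, ?_⟩
    · rw [hx]; exact (hsub (a.1.2.1 0)).1
    · intro i
      rw [hv i]
      have hbS : ∑ jj, ((a.1.1 i).2 jj) ^ 2 = 1 := (hsub (a.1.2.1 i)).2
      have hsum : ∑ jj, ((mm p ((a.2 : Fin (p+1) → ℝ) i) • (a.1.1 i).2) jj) ^ 2
          = mm p ((a.2 : Fin (p+1) → ℝ) i) ^ 2 * ∑ jj, ((a.1.1 i).2 jj) ^ 2 := by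
        rw [Finset.mul_sum]
        refine Finset.sum_congr rfl fun jj _ => ?_
        simp only [Pi.smul_apply, smul_eq_mul]
        ring
      rw [hsum, hbS, mul_one]
      have h0 := mm_nonneg p (a.2.2.1 i)
      have h1 := mm_le_one p ((a.2 : Fin (p+1) → ℝ) i)
      nlinarith
    · intro i
      rcases eq_or_ne (tsh p 1 g.1.2.2 i) 0 with h | h
      · exact Or.inl h
      · refine Or.inr ?_
        have hbig : eps p < g.1.2.2 i := by
          have := tsh_ne_imp h; rwa [one_mul] at this
        rw [hv i, hx, hts] at *
        rw [mm_of_big p (by rwa [hts] at hbig), one_smul]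
        have : ((a.1.1 0).1, (a.1.1 i).2) = a.1.1 i := by
          rw [← a.1.2.2 i]
        rw [this]
        exact a.1.2.1 i⟩
  continuous_toFun := by
    apply Continuous.subtype_mk
    refine Continuous.prodMk ?_ (Continuous.prodMk ?_ ?_)
    · exact continuous_fst.comp continuous_subtype_val
    · exact continuous_fst.comp (continuous_snd.comp continuous_subtype_val)
    · exact continuous_tsh continuous_const
        (continuous_snd.comp (continuous_snd.comp continuous_subtype_val))
        (fun g => Gset_t_mem g.2) (fun _ => le_rfl)

/-- The homotopy on the ball model side. -/
noncomputable def Hprime (k l p : ℕ) {S : Set ((Fin (k + 1) → ℝ) × (Fin (l + 1) → ℝ))}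
    (hsub : S ⊆ (unitSphere k) ×ˢ (unitSphere l)) :
    ContinuousMap.Homotopy (ContinuousMap.id ↥(Eset k l p S))
      ((del k l p hsub).comp (gam k l p S)) where
  toFun q := ⟨(q.2.1.1, fun i => ff p q.1.1 (q.2.1.2.2 i) • q.2.1.2.1 i,
      tsh p q.1.1 q.2.1.2.2), by
    obtain ⟨hx, ht, hb, hf⟩ := q.2.2
    have hs0 : (0:ℝ) ≤ q.1.1 := q.1.2.1
    have hs1 : q.1.1 ≤ 1 := q.1.2.2
    refine ⟨hx, tsh_mem ht hs1, ?_, ?_⟩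
    · intro i
      have hff0 := ff_nonneg p hs0 hs1 (ht.1 i)
      have hff1 := ff_le_one p q.1.1 (q.2.1.2.2 i)
      have hsum : ∑ jj, ((ff p q.1.1 (q.2.1.2.2 i) • q.2.1.2.1 i) jj) ^ 2
          = ff p q.1.1 (q.2.1.2.2 i) ^ 2 * ∑ jj, (q.2.1.2.1 i jj) ^ 2 := by
        rw [Finset.mul_sum]
        refine Finset.sum_congr rfl fun jj _ => ?_
        simp only [Pi.smul_apply, smul_eq_mul]
        ring
      rw [hsum]
      have hbi := hb i
      have hnn : (0:ℝ) ≤ ∑ jj, (q.2.1.2.1 i jj) ^ 2 :=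
        Finset.sum_nonneg fun jj _ => sq_nonneg _
      nlinarith
    · intro i
      rcases eq_or_ne (tsh p q.1.1 q.2.1.2.2 i) 0 with h | h
      · exact Or.inl h
      · refine Or.inr ?_
        have hbig := tsh_ne_imp h
        show (q.2.1.1, ff p q.1.1 (q.2.1.2.2 i) • q.2.1.2.1 i) ∈ S
        rw [ff_of_big p hbig, one_smul]
        exact (hf i).resolve_left (tsh_pos_imp hs0 h).ne'⟩
  continuous_toFun := by
    apply Continuous.subtype_mk
    refine Continuous.prodMk ?_ (Continuous.prodMk ?_ ?_)
    · exact continuous_fst.comp (continuous_subtype_val.comp continuous_snd)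
    · apply continuous_pi; intro i
      refine Continuous.fun_smul (M := ℝ) ?_ ((continuous_apply i).comp (continuous_fst.comp
        (continuous_snd.comp ((continuous_subtype_val (p := fun w => w ∈ Eset k l p S)).comp (continuous_snd (X := unitInterval))))))
      exact (continuous_ff p).comp
        ((continuous_subtype_val.comp continuous_fst).prodMk
          ((continuous_apply i).comp (continuous_snd.comp
            (continuous_snd.comp (continuous_subtype_val.comp continuous_snd)))))
    · exact continuous_tsh (continuous_subtype_val.comp continuous_fst)
        (continuous_snd.comp (continuous_snd.comp (continuous_subtype_val.comp continuous_snd)))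
        (fun q => q.2.2.2.1) (fun q => q.1.2.2)
  map_zero_left e := by
    apply Subtype.ext
    obtain ⟨hx, ht, hb, hf⟩ := e.2
    refine Prod.ext rfl (Prod.ext ?_ ?_)
    · funext i
      show ff p ((0 : unitInterval) : ℝ) (e.1.2.2 i) • e.1.2.1 i = e.1.2.1 i
      rw [Set.Icc.coe_zero, ff_zero p (ht.1 i), one_smul]
    · show tsh p ((0 : unitInterval) : ℝ) e.1.2.2 = e.1.2.2
      rw [Set.Icc.coe_zero, tsh_zero ht]
  map_one_left e := by
    apply Subtype.ext
    refine Prod.ext rfl (Prod.ext ?_ ?_)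
    · funext i
      show ff p ((1 : unitInterval) : ℝ) (e.1.2.2 i) • e.1.2.1 i
          = mm p (e.1.2.2 i) • e.1.2.1 i
      rw [Set.Icc.coe_one, ff_one]
    · show tsh p ((1 : unitInterval) : ℝ) e.1.2.2 = tsh p 1 e.1.2.2
      rw [Set.Icc.coe_one]

lemma Hfun_eq_mu (s : ℝ) (hs0 : 0 ≤ s) (hs1 : s ≤ 1)
    (a : ↥(fiberW S Prod.fst p) × ↥(simplexΔ p)) :
    ((mu S p a).1,
      (fun i => (mm p (tsh p s (mu S p a).2.2 i) / mm p ((mu S p a).2.2 i)) • (mu S p a).2.1 i),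
      tsh p s (mu S p a).2.2)
    = mu S p (a.1, ⟨tsh p s (a.2 : Fin (p+1) → ℝ), tsh_mem a.2.2 hs1⟩) := by
  refine Prod.ext rfl (Prod.ext ?_ rfl)
  funext i
  show (mm p (tsh p s (a.2 : Fin (p+1) → ℝ) i) / mm p ((a.2 : Fin (p+1) → ℝ) i)) •
      (mm p ((a.2 : Fin (p+1) → ℝ) i) • (a.1.1 i).2)
      = mm p (tsh p s (a.2 : Fin (p+1) → ℝ) i) • (a.1.1 i).2
  rw [smul_smul]
  by_cases h : (a.2 : Fin (p+1) → ℝ) i = 0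
  · rw [h, tsh_eq_zero hs0 h, mm_zero]
    simp
  · have hne : mm p ((a.2 : Fin (p+1) → ℝ) i) ≠ 0 :=
      (mm_pos p (lt_of_le_of_ne (a.2.2.1 i) (Ne.symm h))).ne'
    rw [div_mul_cancel₀ _ hne]

/-- The homotopy on the geometric model side. -/
noncomputable def Hgeo (k l p : ℕ) {S : Set ((Fin (k + 1) → ℝ) × (Fin (l + 1) → ℝ))}
    (hsub : S ⊆ (unitSphere k) ×ˢ (unitSphere l)) (hcl : IsClosed S) :
    ContinuousMap.Homotopy (ContinuousMap.id ↥(Gset S p))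
      ((gam k l p S).comp (del k l p hsub)) where
  toFun q := ⟨(q.2.1.1, fun i => (mm p (tsh p q.1.1 q.2.1.2.2 i) / mm p (q.2.1.2.2 i)) •
      q.2.1.2.1 i, tsh p q.1.1 q.2.1.2.2), by
    obtain ⟨a, ha⟩ := q.2.2
    refine ⟨(a.1, ⟨tsh p q.1.1 (a.2 : Fin (p+1) → ℝ), tsh_mem a.2.2 q.1.2.2⟩), ?_⟩
    rw [← Hfun_eq_mu q.1.1 q.1.2.1 q.1.2.2 a, ha]⟩
  continuous_toFun := by
    haveI : CompactSpace ↥(fiberW S Prod.fst p) :=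
      isCompact_iff_compactSpace.mp (isCompact_fiberW hsub hcl)
    haveI : CompactSpace ↥(simplexΔ p) := isCompact_iff_compactSpace.mp (isCompact_simplex p)
    set muK : (↥(fiberW S Prod.fst p) × ↥(simplexΔ p)) → ↥(Gset S p) :=
      fun a => ⟨mu S p a, Set.mem_range_self a⟩ with hmuK
    have hmuKc : Continuous muK := (continuous_mu S p).subtype_mk _
    have hmuKs : Function.Surjective muK := by
      rintro ⟨w, a, rfl⟩; exact ⟨a, rfl⟩
    have hcont : Continuous (Prod.map (id : unitInterval → unitInterval) muK) :=
      continuous_id.prodMap hmuKc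
    have hq : Topology.IsQuotientMap (Prod.map (id : unitInterval → unitInterval) muK) :=
      IsClosedMap.isQuotientMap hcont.isClosedMap hcont
        (Function.surjective_id.prodMap hmuKs)
    rw [hq.continuous_iff]
    have htsh : Continuous fun q : unitInterval × (↥(fiberW S Prod.fst p) × ↥(simplexΔ p)) =>
        tsh p (q.1 : ℝ) ((q.2.2 : Fin (p+1) → ℝ)) :=
      continuous_tsh (continuous_subtype_val.comp continuous_fst)
        (continuous_subtype_val.comp (continuous_snd.comp continuous_snd))
        (fun q => q.2.2.2) (fun q => q.1.2.2)
    have heq : ((fun q : unitInterval × ↥(Gset S p) =>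
        (⟨(q.2.1.1, fun i => (mm p (tsh p (q.1:ℝ) q.2.1.2.2 i) / mm p (q.2.1.2.2 i)) •
          q.2.1.2.1 i, tsh p (q.1:ℝ) q.2.1.2.2), by
            obtain ⟨a, ha⟩ := q.2.2
            refine ⟨(a.1, ⟨tsh p (q.1:ℝ) (a.2 : Fin (p+1) → ℝ), tsh_mem a.2.2 q.1.2.2⟩), ?_⟩
            rw [← Hfun_eq_mu (q.1:ℝ) q.1.2.1 q.1.2.2 a, ha]⟩ : ↥(Gset S p))) ∘
        (Prod.map (id : unitInterval → unitInterval) muK))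
        = fun q : unitInterval × (↥(fiberW S Prod.fst p) × ↥(simplexΔ p)) =>
          (⟨mu S p (q.2.1, ⟨tsh p (q.1:ℝ) ((q.2.2 : Fin (p+1) → ℝ)), tsh_mem q.2.2.2 q.1.2.2⟩),
            Set.mem_range_self _⟩ : ↥(Gset S p)) := by
      funext q
      apply Subtype.ext
      exact Hfun_eq_mu (q.1:ℝ) q.1.2.1 q.1.2.2 q.2
    rw [heq]
    apply Continuous.subtype_mk
    simp only [mu]
    refine Continuous.prodMk ?_ (Continuous.prodMk ?_ ?_)
    · exact continuous_fst.comp ((continuous_apply 0).comp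
        (continuous_subtype_val.comp (continuous_fst.comp continuous_snd)))
    · apply continuous_pi; intro i
      exact ((continuous_mm p).comp ((continuous_apply i).comp htsh)).smul
        (continuous_snd.comp ((continuous_apply i).comp
          (continuous_subtype_val.comp (continuous_fst.comp continuous_snd))))
    · exact htsh
  map_zero_left g := by
    apply Subtype.ext
    have htmem : g.1.2.2 ∈ simplexΔ p := Gset_t_mem g.2
    refine Prod.ext rfl (Prod.ext ?_ ?_)
    · funext i
      show (mm p (tsh p ((0 : unitInterval) : ℝ) g.1.2.2 i) / mm p (g.1.2.2 i)) • g.1.2.1 i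
          = g.1.2.1 i
      rw [Set.Icc.coe_zero, tsh_zero htmem]
      by_cases h : g.1.2.2 i = 0
      · obtain ⟨a, ha⟩ := g.2
        have hv : g.1.2.1 i = mm p ((a.2 : Fin (p+1) → ℝ) i) • (a.1.1 i).2 := by
          rw [← ha]; rfl
        have hts : g.1.2.2 i = (a.2 : Fin (p+1) → ℝ) i := by rw [← ha]; rfl
        rw [hv, ← hts, h, mm_zero, zero_smul, smul_zero]
      · have hne : mm p (g.1.2.2 i) ≠ 0 :=
          (mm_pos p (lt_of_le_of_ne (htmem.1 i) (Ne.symm h))).ne'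
        rw [div_self hne, one_smul]
    · show tsh p ((0 : unitInterval) : ℝ) g.1.2.2 = g.1.2.2
      rw [Set.Icc.coe_zero, tsh_zero htmem]
  map_one_left g := by
    apply Subtype.ext
    refine Prod.ext rfl (Prod.ext ?_ ?_)
    · funext i
      show (mm p (tsh p ((1 : unitInterval) : ℝ) g.1.2.2 i) / mm p (g.1.2.2 i)) • g.1.2.1 i
          = mm p (tsh p 1 g.1.2.2 i) • g.1.2.1 i
      rw [Set.Icc.coe_one]
      rcases eq_or_ne (tsh p 1 g.1.2.2 i) 0 with h | h
      · rw [h, mm_zero]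
        simp
      · have hbig : eps p < g.1.2.2 i := by
          have := tsh_ne_imp h; rwa [one_mul] at this
        rw [mm_of_big p hbig, div_one]
    · show tsh p ((1 : unitInterval) : ℝ) g.1.2.2 = tsh p 1 g.1.2.2
      rw [Set.Icc.coe_one]

/-- The ball model is homotopy equivalent to the geometric model. -/
noncomputable def heEG (k l p : ℕ) {S : Set ((Fin (k + 1) → ℝ) × (Fin (l + 1) → ℝ))}
    (hsub : S ⊆ (unitSphere k) ×ˢ (unitSphere l)) (hcl : IsClosed S) :
    ContinuousMap.HomotopyEquiv ↥(Eset k l p S) ↥(Gset S p) where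
  toFun := gam k l p S
  invFun := del k l p hsub
  left_inv := ⟨(Hprime k l p hsub).symm⟩
  right_inv := ⟨(Hgeo k l p hsub hcl).symm⟩

end DJP

/-- For a closed semialgebraic subset `S ⊆ S^k × S^ℓ`, the set
`D^p_{Y,c}(S)` is homotopy equivalent to the `(p+1)`-fold join `J^p_{π_Y}(S)` of `S`
over the projection `π_Y` to the first factor. -/
theorem Dc_homotopyEquiv_joinOverMap (k l : ℕ)
    (S : Set ((Fin (k + 1) → ℝ) × (Fin (l + 1) → ℝ)))
    (hsub : S ⊆ (unitSphere k) ×ˢ (unitSphere l)) (hcl : IsClosed S)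
    (hsa : IsSemialgebraicPair S) (p : ℕ) :
    Nonempty (ContinuousMap.HomotopyEquiv ↥(Dc k l p S) (JoinOverMap S Prod.fst p)) :=
  ⟨((DJP.homeoDcE k l p S).toHomotopyEquiv.trans (DJP.heEG k l p hsub hcl)).trans
    ((DJP.homeoJG hsub hcl p).symm.toHomotopyEquiv)⟩
end

section
/- Let S be a closed semialgebraic subset of S^k × S^ℓ, let π_Y : S → S^k be the restriction of the projection onto the first factor, and let p ≥ 0. The map g : D^p_{Y,c}(S) → J^p_{π_Y}(S) sending (u, x, y^0, …, y^p, t) to the equivalence class of ((x,y^0), …, (x,y^p), t) is a well-defined continuous surjection, and the preimage g^{-1}(w) of every point w ∈ J^p_{π_Y}(S) is a contractible topological space. -/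
open CategoryTheory

namespace Stmt10

variable {k l p : ℕ}

/-- The underlying function of the separating map `φ`. -/
def phiFun (S : Set ((Fin (k + 1) → ℝ) × (Fin (l + 1) → ℝ)))
    (a : (fiberW S Prod.fst p) × (simplexΔ p)) :
    (Fin (p + 1) → ℝ) × (Fin (p + 1) → (Fin (k + 1) → ℝ) × (Fin (l + 1) → ℝ)) :=
  ((a.2 : Fin (p + 1) → ℝ), fun i => (a.2 : Fin (p + 1) → ℝ) i • (a.1.1 i))

lemma phiFun_rel (S : Set ((Fin (k + 1) → ℝ) × (Fin (l + 1) → ℝ)))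
    (a b : (fiberW S Prod.fst p) × (simplexΔ p)) (h : joinOverRel S Prod.fst p a b) :
    phiFun S a = phiFun S b := by
  obtain ⟨va, ta⟩ := a
  obtain ⟨vb, tb⟩ := b
  obtain ⟨h1, h2⟩ := h
  cases h1
  refine Prod.ext rfl ?_
  funext i
  by_cases hi : (ta : Fin (p + 1) → ℝ) i = 0
  · simp [phiFun, hi]
  · simp only [phiFun]
    rw [h2 i hi]

/-- The injective continuous separating map `φ` on the join. -/
def phi (S : Set ((Fin (k + 1) → ℝ) × (Fin (l + 1) → ℝ))) :
    JoinOverMap S Prod.fst p →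
      (Fin (p + 1) → ℝ) × (Fin (p + 1) → (Fin (k + 1) → ℝ) × (Fin (l + 1) → ℝ)) :=
  Quot.lift (phiFun S) (phiFun_rel S)

lemma phi_injective (S : Set ((Fin (k + 1) → ℝ) × (Fin (l + 1) → ℝ))) :
    Function.Injective (phi (p := p) S) := by
  intro q1 q2
  induction q1 using Quot.ind with | _ a =>
  induction q2 using Quot.ind with | _ b =>
  intro h
  obtain ⟨va, ta⟩ := a
  obtain ⟨vb, tb⟩ := b
  have h1 : (ta : Fin (p + 1) → ℝ) = tb := congrArg Prod.fst h
  have h2 := congrArg Prod.snd h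
  apply Quot.sound
  refine ⟨Subtype.ext h1, fun i hi => ?_⟩
  have h3 : ((ta : Fin (p + 1) → ℝ) i) • (va.1 i) = ((tb : Fin (p + 1) → ℝ) i) • (vb.1 i) :=
    congrFun h2 i
  rw [← h1] at h3
  exact smul_right_injective ((Fin (k + 1) → ℝ) × (Fin (l + 1) → ℝ)) hi h3

lemma phi_continuous (S : Set ((Fin (k + 1) → ℝ) × (Fin (l + 1) → ℝ))) :
    Continuous (phi (p := p) S) := by
  apply continuous_quot_lift
  refine Continuous.prodMk (continuous_subtype_val.comp continuous_snd) ?_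
  refine continuous_pi fun i => ?_
  exact ((continuous_apply i).comp (continuous_subtype_val.comp continuous_snd)).smul
    ((continuous_apply i).comp (continuous_subtype_val.comp continuous_fst))

lemma sphere_subset_closedBall (n : ℕ) :
    unitSphere n ⊆ Metric.closedBall (0 : Fin (n + 1) → ℝ) 1 := by
  intro x hx
  rw [Metric.mem_closedBall, dist_pi_le_iff zero_le_one]
  intro i
  have h1 : x i ^ 2 ≤ 1 := by
    rw [← hx]
    exact Finset.single_le_sum (fun j _ => sq_nonneg (x j)) (Finset.mem_univ i)
  rw [Real.dist_eq, Pi.zero_apply, sub_zero]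
  exact (sq_le_one_iff_abs_le_one (x i)).mp h1

lemma simplex_subset_closedBall (p : ℕ) :
    simplexΔ p ⊆ Metric.closedBall (0 : Fin (p + 1) → ℝ) 1 := by
  intro t ht
  rw [Metric.mem_closedBall, dist_pi_le_iff zero_le_one]
  intro i
  rw [Real.dist_eq, Pi.zero_apply, sub_zero, abs_of_nonneg (ht.1 i), ← ht.2]
  exact Finset.single_le_sum (fun j _ => ht.1 j) (Finset.mem_univ i)

lemma simplex_isCompact (p : ℕ) : IsCompact (simplexΔ p) := by
  refine (isCompact_closedBall _ _).of_isClosed_subset ?_ (simplex_subset_closedBall p)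
  have h1 : IsClosed {t : Fin (p + 1) → ℝ | ∀ i, 0 ≤ t i} := by
    have : {t : Fin (p + 1) → ℝ | ∀ i, 0 ≤ t i} = ⋂ i, {t | 0 ≤ t i} := by
      ext t; simp
    rw [this]
    exact isClosed_iInter fun i => isClosed_le continuous_const (continuous_apply i)
  have h2 : IsClosed {t : Fin (p + 1) → ℝ | ∑ i, t i = 1} :=
    isClosed_eq (continuous_finset_sum _ fun i _ => continuous_apply i) continuous_const
  exact h1.inter h2

lemma simplex_sum_sq_le_one {p : ℕ} {t : Fin (p + 1) → ℝ} (ht : t ∈ simplexΔ p) :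
    ∑ i, t i ^ 2 ≤ 1 := by
  have h1 : ∀ i, t i ^ 2 ≤ t i := by
    intro i
    have hle : t i ≤ 1 := by
      rw [← ht.2]
      exact Finset.single_le_sum (fun j _ => ht.1 j) (Finset.mem_univ i)
    nlinarith [ht.1 i]
  calc ∑ i, t i ^ 2 ≤ ∑ i, t i := Finset.sum_le_sum fun i _ => h1 i
    _ = 1 := ht.2

lemma S_isCompact (S : Set ((Fin (k + 1) → ℝ) × (Fin (l + 1) → ℝ)))
    (hsub : S ⊆ (unitSphere k) ×ˢ (unitSphere l)) (hcl : IsClosed S) : IsCompact S := by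
  have h1 : S ⊆ (Metric.closedBall (0 : Fin (k + 1) → ℝ) 1) ×ˢ
      (Metric.closedBall (0 : Fin (l + 1) → ℝ) 1) := fun z hz =>
    ⟨sphere_subset_closedBall k (hsub hz).1, sphere_subset_closedBall l (hsub hz).2⟩
  exact ((isCompact_closedBall _ _).prod (isCompact_closedBall _ _)).of_isClosed_subset hcl h1

lemma fiberW_isCompact (S : Set ((Fin (k + 1) → ℝ) × (Fin (l + 1) → ℝ)))
    (hsub : S ⊆ (unitSphere k) ×ˢ (unitSphere l)) (hcl : IsClosed S) :
    IsCompact (fiberW S Prod.fst p) := by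
  have hS := S_isCompact S hsub hcl
  refine (isCompact_univ_pi fun _ : Fin (p + 1) => hS).of_isClosed_subset ?_ ?_
  · have h1 : IsClosed {x : Fin (p + 1) → ((Fin (k + 1) → ℝ) × (Fin (l + 1) → ℝ)) |
        ∀ i, x i ∈ S} := by
      have : {x : Fin (p + 1) → ((Fin (k + 1) → ℝ) × (Fin (l + 1) → ℝ)) | ∀ i, x i ∈ S}
          = ⋂ i, (fun x => x i) ⁻¹' S := by ext x; simp
      rw [this]
      exact isClosed_iInter fun i => hcl.preimage (continuous_apply i)
    have h2 : IsClosed {x : Fin (p + 1) → ((Fin (k + 1) → ℝ) × (Fin (l + 1) → ℝ)) |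
        ∀ i, (x i).1 = (x 0).1} := by
      have : {x : Fin (p + 1) → ((Fin (k + 1) → ℝ) × (Fin (l + 1) → ℝ)) |
          ∀ i, (x i).1 = (x 0).1} = ⋂ i, {x | (x i).1 = (x 0).1} := by ext x; simp
      rw [this]
      exact isClosed_iInter fun i =>
        isClosed_eq ((continuous_apply i).fst) ((continuous_apply 0).fst)
    exact h1.inter h2
  · intro x hx
    rw [Set.mem_univ_pi]
    exact hx.1


/-- The `Y`-component of the contraction flow on a fiber. -/
noncomputable def flowY (t0 : Fin (p + 1) → ℝ) (s : ℝ) (Y : Fin (p + 1) → Fin (l + 1) → ℝ) :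
    Fin (p + 1) → Fin (l + 1) → ℝ :=
  fun i => if t0 i = 0 then (1 - s) • Y i else Y i

/-- The contraction flow on a fiber. -/
noncomputable def flow (k l p : ℕ) (t0 : Fin (p + 1) → ℝ) (s : ℝ)
    (w : ℝ × (Fin (k + 1) → ℝ) × (Fin (p + 1) → Fin (l + 1) → ℝ) × (Fin (p + 1) → ℝ)) :
    ℝ × (Fin (k + 1) → ℝ) × (Fin (p + 1) → Fin (l + 1) → ℝ) × (Fin (p + 1) → ℝ) :=
  (Real.sqrt ((p : ℝ) + 4 - (∑ j, w.2.1 j ^ 2) - (∑ i, ∑ j, flowY t0 s w.2.2.1 i j ^ 2)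
      - (∑ i, w.2.2.2 i ^ 2)),
   w.2.1, flowY t0 s w.2.2.1, w.2.2.2)

lemma flowY_sum_sq_le (t0 : Fin (p + 1) → ℝ) {s : ℝ} (hs0 : 0 ≤ s) (hs1 : s ≤ 1)
    {Y : Fin (p + 1) → Fin (l + 1) → ℝ} (hY : ∀ i, ∑ j, Y i j ^ 2 ≤ 1) (i : Fin (p + 1)) :
    ∑ j, flowY t0 s Y i j ^ 2 ≤ 1 := by
  by_cases hi : t0 i = 0
  · simp only [flowY, if_pos hi, Pi.smul_apply, smul_eq_mul, mul_pow, ← Finset.mul_sum]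
    have h0 : (0 : ℝ) ≤ ∑ j, Y i j ^ 2 := Finset.sum_nonneg fun j _ => sq_nonneg _
    nlinarith [hY i]
  · simpa only [flowY, if_neg hi] using hY i

lemma flow_E_nonneg {k l p : ℕ} {S : Set ((Fin (k + 1) → ℝ) × (Fin (l + 1) → ℝ))}
    {w : ℝ × (Fin (k + 1) → ℝ) × (Fin (p + 1) → Fin (l + 1) → ℝ) × (Fin (p + 1) → ℝ)}
    (hw : w ∈ Dc k l p S) (t0 : Fin (p + 1) → ℝ) {s : ℝ} (hs0 : 0 ≤ s) (hs1 : s ≤ 1) :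
    0 ≤ (p : ℝ) + 4 - (∑ j, w.2.1 j ^ 2) - (∑ i, ∑ j, flowY t0 s w.2.2.1 i j ^ 2)
      - (∑ i, w.2.2.2 i ^ 2) := by
  obtain ⟨hx, ht, hY, hmem, hu, heq⟩ := hw
  have h1 : ∑ i, ∑ j, flowY t0 s w.2.2.1 i j ^ 2 ≤ (p : ℝ) + 1 := by
    calc ∑ i : Fin (p + 1), ∑ j, flowY t0 s w.2.2.1 i j ^ 2
        ≤ ∑ _i : Fin (p + 1), (1 : ℝ) :=
          Finset.sum_le_sum fun i _ => flowY_sum_sq_le t0 hs0 hs1 hY i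
      _ = (p : ℝ) + 1 := by simp
  have h2 : ∑ i, w.2.2.2 i ^ 2 ≤ 1 := simplex_sum_sq_le_one ht
  rw [hx]
  linarith

lemma flow_mem {k l p : ℕ} {S : Set ((Fin (k + 1) → ℝ) × (Fin (l + 1) → ℝ))}
    {w : ℝ × (Fin (k + 1) → ℝ) × (Fin (p + 1) → Fin (l + 1) → ℝ) × (Fin (p + 1) → ℝ)}
    (hw : w ∈ Dc k l p S) {t0 : Fin (p + 1) → ℝ} (hwt : w.2.2.2 = t0)
    {s : ℝ} (hs0 : 0 ≤ s) (hs1 : s ≤ 1) :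
    flow k l p t0 s w ∈ Dc k l p S := by
  have hE := flow_E_nonneg hw t0 hs0 hs1
  obtain ⟨hx, ht, hY, hmem, hu, heq⟩ := hw
  unfold flow
  refine ⟨hx, ht, fun i => flowY_sum_sq_le t0 hs0 hs1 hY i, ?_, Real.sqrt_nonneg _, ?_⟩
  · intro i
    by_cases hi : t0 i = 0
    · exact Or.inl (by rw [hwt]; exact hi)
    · refine Or.inr ?_
      have hi' : w.2.2.2 i ≠ 0 := by rw [hwt]; exact hi
      have := (hmem i).resolve_left hi'
      simpa only [flowY, if_neg hi] using this
  · dsimp only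
    rw [Real.sq_sqrt hE]
    ring

lemma flow_zero {k l p : ℕ} {S : Set ((Fin (k + 1) → ℝ) × (Fin (l + 1) → ℝ))}
    {w : ℝ × (Fin (k + 1) → ℝ) × (Fin (p + 1) → Fin (l + 1) → ℝ) × (Fin (p + 1) → ℝ)}
    (hw : w ∈ Dc k l p S) (t0 : Fin (p + 1) → ℝ) : flow k l p t0 0 w = w := by
  obtain ⟨hx, ht, hY, hmem, hu, heq⟩ := hw
  have hYeq : flowY t0 0 w.2.2.1 = w.2.2.1 := by
    funext i
    by_cases hi : t0 i = 0
    · simp [flowY, hi]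
    · simp [flowY, hi]
  have hueq : Real.sqrt ((p : ℝ) + 4 - (∑ j, w.2.1 j ^ 2)
      - (∑ i, ∑ j, flowY t0 0 w.2.2.1 i j ^ 2) - (∑ i, w.2.2.2 i ^ 2)) = w.1 := by
    rw [hYeq]
    have : (p : ℝ) + 4 - (∑ j, w.2.1 j ^ 2) - (∑ i, ∑ j, w.2.2.1 i j ^ 2)
        - (∑ i, w.2.2.2 i ^ 2) = w.1 ^ 2 := by linarith
    rw [this, Real.sqrt_sq hu]
  unfold flow
  rw [hueq, hYeq]


open Topology

variable (S : Set ((Fin (k + 1) → ℝ) × (Fin (l + 1) → ℝ)))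

lemma exists_j (w : ↥(Dc k l p S)) : ∃ j, w.1.2.2.2 j ≠ 0 := by
  by_contra hcon
  push_neg at hcon
  have h1 := w.2.2.1.2
  rw [Finset.sum_congr rfl fun j _ => hcon j] at h1
  simp at h1

open Classical in
/-- The underlying `fiberW` element of `g w`. -/
noncomputable def gv (w : ↥(Dc k l p S)) :
    Fin (p + 1) → ((Fin (k + 1) → ℝ) × (Fin (l + 1) → ℝ)) :=
  fun i => (w.1.2.1, if (w.1.2.1, w.1.2.2.1 i) ∈ S then w.1.2.2.1 i
    else w.1.2.2.1 (exists_j S w).choose)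

lemma gv_mem (w : ↥(Dc k l p S)) : gv S w ∈ fiberW S Prod.fst p := by
  constructor
  · intro i
    unfold gv
    by_cases hi : (w.1.2.1, w.1.2.2.1 i) ∈ S
    · rw [if_pos hi]; exact hi
    · rw [if_neg hi]
      exact (w.2.2.2.2.1 (exists_j S w).choose).resolve_left (exists_j S w).choose_spec
  · intro i
    rfl

/-- The map `g : D^p_{Y,c}(S) → J^p_{π_Y}(S)`. -/
noncomputable def gmap (w : ↥(Dc k l p S)) : JoinOverMap S Prod.fst p :=
  Quot.mk _ (⟨gv S w, gv_mem S w⟩, ⟨w.1.2.2.2, w.2.2.1⟩)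

lemma phi_gmap (w : ↥(Dc k l p S)) :
    phi S (gmap S w) = (w.1.2.2.2, fun i => w.1.2.2.2 i • (w.1.2.1, w.1.2.2.1 i)) := by
  refine Prod.ext rfl ?_
  funext i
  show w.1.2.2.2 i • gv S w i = w.1.2.2.2 i • (w.1.2.1, w.1.2.2.1 i)
  by_cases hi : w.1.2.2.2 i = 0
  · rw [hi, zero_smul, zero_smul]
  · unfold gv
    rw [if_pos ((w.2.2.2.2.1 i).resolve_left hi)]

lemma gmap_eq (w : ℝ × (Fin (k + 1) → ℝ) × (Fin (p + 1) → Fin (l + 1) → ℝ) × (Fin (p + 1) → ℝ))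
    (hw : w ∈ Dc k l p S) (v : ↥(fiberW S Prod.fst p)) (τ : ↥(simplexΔ p))
    (hτ : (τ : Fin (p + 1) → ℝ) = w.2.2.2)
    (hv1 : ∀ i, (v.1 i).1 = w.2.1)
    (hv2 : ∀ i, w.2.2.2 i ≠ 0 → (v.1 i).2 = w.2.2.1 i) :
    gmap S ⟨w, hw⟩ = Quot.mk _ (v, τ) := by
  apply Quot.sound
  refine ⟨Subtype.ext hτ.symm, ?_⟩
  intro i hi
  show gv S ⟨w, hw⟩ i = v.1 i
  unfold gv
  rw [if_pos ((hw.2.2.2.1 i).resolve_left hi)]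
  exact Prod.ext_iff.mpr ⟨(hv1 i).symm, (hv2 i hi).symm⟩

lemma gmap_surjective (hsub : S ⊆ (unitSphere k) ×ˢ (unitSphere l)) :
    Function.Surjective (gmap (p := p) S) := by
  intro q
  induction q using Quot.ind with | _ a =>
  obtain ⟨v, τ⟩ := a
  have hx : (v.1 0).1 ∈ unitSphere k := (hsub (v.2.1 0)).1
  have hx' : ∑ j, (v.1 0).1 j ^ 2 = 1 := hx
  have hYsph : ∀ i, ∑ j, (v.1 i).2 j ^ 2 = 1 := fun i => (hsub (v.2.1 i)).2
  have hvi : ∀ i, ((v.1 0).1, (v.1 i).2) = v.1 i := fun i => by rw [← v.2.2 i]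
  have ht2 : ∑ i, (τ : Fin (p + 1) → ℝ) i ^ 2 ≤ 1 := simplex_sum_sq_le_one τ.2
  have hE : (0 : ℝ) ≤ 2 - ∑ i, (τ : Fin (p + 1) → ℝ) i ^ 2 := by linarith
  have h1 : ∑ i : Fin (p + 1), ∑ j, (v.1 i).2 j ^ 2 = (p : ℝ) + 1 := by
    rw [Finset.sum_congr rfl fun i _ => hYsph i]
    simp
  have hw : ((Real.sqrt (2 - ∑ i, (τ : Fin (p + 1) → ℝ) i ^ 2), (v.1 0).1,
      fun i => (v.1 i).2, (τ : Fin (p + 1) → ℝ)) :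
        ℝ × (Fin (k + 1) → ℝ) × (Fin (p + 1) → Fin (l + 1) → ℝ) × (Fin (p + 1) → ℝ))
      ∈ Dc k l p S := by
    refine ⟨hx, τ.2, fun i => le_of_eq (hYsph i),
      fun i => Or.inr (by rw [hvi i]; exact v.2.1 i), Real.sqrt_nonneg _, ?_⟩
    dsimp only
    rw [Real.sq_sqrt hE, h1, hx']
    ring
  exact ⟨⟨_, hw⟩, gmap_eq S _ hw v τ rfl (fun i => v.2.2 i) (fun i _ => rfl)⟩

lemma fiber_rigid (w w' : ↥(Dc k l p S)) (h : gmap S w = gmap S w') :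
    w.1.2.2.2 = w'.1.2.2.2 ∧ w.1.2.1 = w'.1.2.1 ∧
      ∀ i, w'.1.2.2.2 i ≠ 0 → w.1.2.2.1 i = w'.1.2.2.1 i := by
  have h2 := congrArg (phi S) h
  rw [phi_gmap, phi_gmap] at h2
  have ht : w.1.2.2.2 = w'.1.2.2.2 := congrArg Prod.fst h2
  have h3 : ∀ i, w.1.2.2.2 i • ((w.1.2.1, w.1.2.2.1 i) :
      (Fin (k + 1) → ℝ) × (Fin (l + 1) → ℝ)) = w'.1.2.2.2 i • (w'.1.2.1, w'.1.2.2.1 i) :=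
    fun i => congrFun (congrArg Prod.snd h2) i
  obtain ⟨j, hj⟩ := exists_j S w'
  have hxy : ∀ i, w'.1.2.2.2 i ≠ 0 →
      ((w.1.2.1, w.1.2.2.1 i) : (Fin (k + 1) → ℝ) × (Fin (l + 1) → ℝ))
        = (w'.1.2.1, w'.1.2.2.1 i) := by
    intro i hi
    have h4 := h3 i
    rw [ht] at h4
    exact smul_right_injective ((Fin (k + 1) → ℝ) × (Fin (l + 1) → ℝ)) hi h4
  exact ⟨ht, (Prod.mk.injEq _ _ _ _ ▸ hxy j hj).1,
    fun i hi => (Prod.mk.injEq _ _ _ _ ▸ hxy i hi).2⟩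

lemma gmap_flow (w : ↥(Dc k l p S)) {t0 : Fin (p + 1) → ℝ} (hwt : w.1.2.2.2 = t0)
    {s : ℝ} (hs0 : 0 ≤ s) (hs1 : s ≤ 1) :
    gmap S ⟨flow k l p t0 s w.1, flow_mem w.2 hwt hs0 hs1⟩ = gmap S w := by
  apply phi_injective S
  rw [phi_gmap, phi_gmap]
  refine Prod.ext rfl ?_
  funext i
  show (flow k l p t0 s w.1).2.2.2 i • ((flow k l p t0 s w.1).2.1,
    (flow k l p t0 s w.1).2.2.1 i) = _
  dsimp only [flow]
  by_cases hi : t0 i = 0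
  · have h0 : w.1.2.2.2 i = 0 := by rw [hwt]; exact hi
    rw [h0, zero_smul, zero_smul]
  · rw [show flowY t0 s w.1.2.2.1 i = w.1.2.2.1 i from by unfold flowY; rw [if_neg hi]]

lemma flow_one_const (w w' : ↥(Dc k l p S)) (h : gmap S w = gmap S w') :
    flow k l p w'.1.2.2.2 1 w.1 = flow k l p w'.1.2.2.2 1 w'.1 := by
  obtain ⟨ht, hx, hY⟩ := fiber_rigid S w w' h
  have hYeq : flowY w'.1.2.2.2 1 w.1.2.2.1 = flowY w'.1.2.2.2 1 w'.1.2.2.1 := by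
    funext i
    unfold flowY
    by_cases hi : w'.1.2.2.2 i = 0
    · rw [if_pos hi, if_pos hi]
      simp
    · rw [if_neg hi, if_neg hi, hY i hi]
  unfold flow
  rw [hYeq, ht, hx]

lemma flowY_apply_continuous {X : Type*} [TopologicalSpace X] (t0 : Fin (p + 1) → ℝ)
    (s : X → ℝ) (hs : Continuous s) (Y : X → Fin (p + 1) → Fin (l + 1) → ℝ)
    (hY : Continuous Y) (i : Fin (p + 1)) (j : Fin (l + 1)) :
    Continuous fun x => flowY t0 (s x) (Y x) i j := by
  unfold flowY
  by_cases hi : t0 i = 0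
  · simp only [if_pos hi, Pi.smul_apply, smul_eq_mul]
    exact (continuous_const.sub hs).mul
      ((continuous_apply j).comp ((continuous_apply i).comp hY))
  · simp only [if_neg hi]
    exact (continuous_apply j).comp ((continuous_apply i).comp hY)

lemma flow_continuous {X : Type*} [TopologicalSpace X] (k l p : ℕ) (t0 : Fin (p + 1) → ℝ)
    (s : X → ℝ) (hs : Continuous s)
    (w : X → ℝ × (Fin (k + 1) → ℝ) × (Fin (p + 1) → Fin (l + 1) → ℝ) × (Fin (p + 1) → ℝ))
    (hw : Continuous w) : Continuous fun x => flow k l p t0 (s x) (w x) := by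
  unfold flow
  have hx : Continuous fun x => (w x).2.1 := hw.snd.fst
  have hY : Continuous fun x => (w x).2.2.1 := hw.snd.snd.fst
  have ht : Continuous fun x => (w x).2.2.2 := hw.snd.snd.snd
  refine Continuous.prodMk ?_ (hx.prodMk (Continuous.prodMk ?_ ht))
  · refine Real.continuous_sqrt.comp ?_
    refine Continuous.sub (Continuous.sub (Continuous.sub continuous_const ?_) ?_) ?_
    · exact continuous_finset_sum _ fun j _ => ((continuous_apply j).comp hx).pow 2
    · exact continuous_finset_sum _ fun i _ => continuous_finset_sum _ fun j _ =>
        (flowY_apply_continuous t0 s hs _ hY i j).pow 2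
    · exact continuous_finset_sum _ fun i _ => ((continuous_apply i).comp ht).pow 2
  · exact continuous_pi fun i => continuous_pi fun j => flowY_apply_continuous t0 s hs _ hY i j

lemma gmap_continuous (hsub : S ⊆ (unitSphere k) ×ˢ (unitSphere l)) (hcl : IsClosed S) :
    Continuous (gmap (p := p) S) := by
  haveI : CompactSpace ↥(fiberW S Prod.fst p) :=
    isCompact_iff_compactSpace.mp (fiberW_isCompact S hsub hcl)
  haveI : CompactSpace ↥(simplexΔ p) :=
    isCompact_iff_compactSpace.mp (simplex_isCompact p)
  haveI : CompactSpace (JoinOverMap S Prod.fst p) := Quot.compactSpace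
  haveI : T2Space (JoinOverMap S Prod.fst p) := by
    constructor
    intro a b hab
    obtain ⟨U, V, hU, hV, haU, hbV, hUV⟩ := t2_separation ((phi_injective S).ne hab)
    exact ⟨phi S ⁻¹' U, phi S ⁻¹' V, hU.preimage (phi_continuous S),
      hV.preimage (phi_continuous S), haU, hbV, hUV.preimage _⟩
  have hind : IsInducing (phi (p := p) S) :=
    ((phi_continuous S).isClosedEmbedding (phi_injective S)).isInducing
  rw [hind.continuous_iff]
  have heq : phi S ∘ gmap S = fun w : ↥(Dc k l p S) =>
      (w.1.2.2.2, fun i => w.1.2.2.2 i • (w.1.2.1, w.1.2.2.1 i)) := funext (phi_gmap S)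
  rw [heq]
  have hc : Continuous fun w : ↥(Dc k l p S) => w.1 := continuous_subtype_val
  refine (hc.snd.snd.snd).prodMk (continuous_pi fun i => ?_)
  exact ((continuous_apply i).comp hc.snd.snd.snd).smul
    ((hc.snd.fst).prodMk ((continuous_apply i).comp hc.snd.snd.fst))

end Stmt10

/-- The natural map `g : D^p_{Y,c}(S) → J^p_{π_Y}(S)`, sending
`(u, x, y⁰, …, y^p, t)` to the class of `((x,y⁰), …, (x,y^p), t)`, is a well-defined
continuous surjection all of whose fibers are contractible. -/
theorem Dc_to_joinOverMap_contractible_fibers (k l : ℕ)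
    (S : Set ((Fin (k + 1) → ℝ) × (Fin (l + 1) → ℝ)))
    (hsub : S ⊆ (unitSphere k) ×ˢ (unitSphere l)) (hcl : IsClosed S)
    (hsa : IsSemialgebraicPair S) (p : ℕ) :
    ∃ g : ↥(Dc k l p S) → JoinOverMap S Prod.fst p,
      Continuous g ∧ Function.Surjective g ∧
      (∀ (w : ℝ × (Fin (k + 1) → ℝ) × (Fin (p + 1) → Fin (l + 1) → ℝ) × (Fin (p + 1) → ℝ))
        (hw : w ∈ Dc k l p S)
        (v : ↥(fiberW S Prod.fst p)) (τ : ↥(simplexΔ p)),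
          (τ : Fin (p + 1) → ℝ) = w.2.2.2 →
          (∀ i, (v.1 i).1 = w.2.1) →
          (∀ i, w.2.2.2 i ≠ 0 → (v.1 i).2 = w.2.2.1 i) →
          g ⟨w, hw⟩ = Quot.mk _ (v, τ)) ∧
      ∀ q : JoinOverMap S Prod.fst p, ContractibleSpace ↥(g ⁻¹' {q}) := by
  classical
  refine ⟨Stmt10.gmap S, Stmt10.gmap_continuous S hsub hcl, Stmt10.gmap_surjective S hsub,
    fun w hw v τ hτ hv1 hv2 => Stmt10.gmap_eq S w hw v τ hτ hv1 hv2, ?_⟩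
  intro q
  obtain ⟨w0, hw0⟩ := Stmt10.gmap_surjective S hsub q
  -- every fiber element has `t`-component equal to that of `w0`
  have hzq : ∀ z : ↥(Stmt10.gmap S ⁻¹' {q}), Stmt10.gmap S z.1 = Stmt10.gmap S w0 := by
    intro z
    have h1 : Stmt10.gmap S z.1 = q := z.2
    rw [h1, hw0]
  have hzt : ∀ z : ↥(Stmt10.gmap S ⁻¹' {q}), z.1.1.2.2.2 = w0.1.2.2.2 :=
    fun z => (Stmt10.fiber_rigid S z.1 w0 (hzq z)).1
  -- the contraction homotopy
  have hmemflow : ∀ (z : ↥(Stmt10.gmap S ⁻¹' {q})) (s : ↥unitInterval),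
      Stmt10.flow k l p w0.1.2.2.2 (s : ℝ) z.1.1 ∈ Dc k l p S :=
    fun z s => Stmt10.flow_mem z.1.2 (hzt z) s.2.1 s.2.2
  have hfibflow : ∀ (z : ↥(Stmt10.gmap S ⁻¹' {q})) (s : ↥unitInterval),
      (⟨Stmt10.flow k l p w0.1.2.2.2 (s : ℝ) z.1.1, hmemflow z s⟩ : ↥(Dc k l p S))
        ∈ Stmt10.gmap S ⁻¹' {q} := by
    intro z s
    show Stmt10.gmap S _ = q
    rw [Stmt10.gmap_flow S z.1 (hzt z) s.2.1 s.2.2]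
    exact z.2
  let Hf : ↥unitInterval × ↥(Stmt10.gmap S ⁻¹' {q}) → ↥(Stmt10.gmap S ⁻¹' {q}) :=
    fun sz => ⟨⟨Stmt10.flow k l p w0.1.2.2.2 (sz.1 : ℝ) sz.2.1.1, hmemflow sz.2 sz.1⟩,
      hfibflow sz.2 sz.1⟩
  have hHcont : Continuous Hf := by
    refine Continuous.subtype_mk (Continuous.subtype_mk ?_ _) _
    exact Stmt10.flow_continuous k l p w0.1.2.2.2 _
      (continuous_subtype_val.comp continuous_fst) _
      (continuous_subtype_val.comp (continuous_subtype_val.comp continuous_snd))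
  -- z0 : the base point of the fiber
  have hw0mem : w0 ∈ Stmt10.gmap S ⁻¹' {q} := hw0
  rw [contractible_iff_id_nullhomotopic]
  refine ⟨Hf (1, ⟨w0, hw0mem⟩), ⟨⟨⟨Hf, hHcont⟩, ?_, ?_⟩⟩⟩
  · intro z
    apply Subtype.ext
    apply Subtype.ext
    show Stmt10.flow k l p w0.1.2.2.2 ((0 : ↥unitInterval) : ℝ) z.1.1 = z.1.1
    exact Stmt10.flow_zero z.1.2 w0.1.2.2.2
  · intro z
    apply Subtype.ext
    apply Subtype.ext
    show Stmt10.flow k l p w0.1.2.2.2 ((1 : ↥unitInterval) : ℝ) z.1.1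
      = Stmt10.flow k l p w0.1.2.2.2 ((1 : ↥unitInterval) : ℝ) w0.1
    exact Stmt10.flow_one_const S z.1 w0 (hzq z)
end

section
/- Let A ⊆ ℝ^m × ℝ^n be a semialgebraic set that is either open in ℝ^m × ℝ^n or a semialgebraic compact, and let π : A → ℝ^n be the restriction to A of the coordinate projection (x,y) ↦ y. Then π covers semialgebraic compacts: for every semialgebraic compact L ⊆ π(A) there exists a semialgebraic compact K ⊆ A with π(K) = L. -/
open CategoryTheory

section AuxSA
open Set

lemma sa_of_basic {m : ℕ} {S : Set (Fin m → ℝ)} (h : IsBasicSA S) : IsSemialgebraic S :=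
  ⟨1, 1, fun _ _ => S, fun _ _ => h, by ext x; simp⟩

lemma sa_empty {m : ℕ} : IsSemialgebraic (∅ : Set (Fin m → ℝ)) :=
  ⟨0, 0, fun i => i.elim0, fun i => i.elim0, by simp⟩

lemma sa_univ {m : ℕ} : IsSemialgebraic (Set.univ : Set (Fin m → ℝ)) :=
  sa_of_basic ⟨1, Or.inr (by ext x; simp)⟩

lemma basic_univ {m : ℕ} : IsBasicSA (Set.univ : Set (Fin m → ℝ)) :=
  ⟨1, Or.inr (by ext x; simp)⟩

lemma sa_union {m : ℕ} {S T : Set (Fin m → ℝ)} (hS : IsSemialgebraic S)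
    (hT : IsSemialgebraic T) : IsSemialgebraic (S ∪ T) := by
  obtain ⟨N, M, B, hB, rfl⟩ := hS
  obtain ⟨N', M', C, hC, rfl⟩ := hT
  refine ⟨N + N', max M M', fun i j =>
    if hi : (i : ℕ) < N then
      (if hj : (j : ℕ) < M then B ⟨i, hi⟩ ⟨j, hj⟩ else Set.univ)
    else
      (if hj : (j : ℕ) < M' then C ⟨i - N, by omega⟩ ⟨j, hj⟩ else Set.univ), ?_, ?_⟩
  · intro i j
    dsimp only
    split <;> split <;> first | exact hB _ _ | exact hC _ _ | exact basic_univ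
  · ext x
    simp only [mem_union, mem_iUnion, mem_iInter]
    constructor
    · rintro (⟨i, hi⟩ | ⟨i, hi⟩)
      · refine ⟨⟨i, by omega⟩, fun j => ?_⟩
        rw [dif_pos (show ((⟨(i : ℕ), by omega⟩ : Fin (N + N')) : ℕ) < N from i.isLt)]
        split
        · exact hi _
        · trivial
      · refine ⟨⟨N + i, by omega⟩, fun j => ?_⟩
        rw [dif_neg (by simp)]
        split
        · convert hi ⟨(j : ℕ), by assumption⟩ using 2
          ext; simp
        · trivial
    · rintro ⟨i, hi⟩
      by_cases h : (i : ℕ) < N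
      · refine Or.inl ⟨⟨i, h⟩, fun j => ?_⟩
        have := hi ⟨(j : ℕ), by omega⟩
        rw [dif_pos h, dif_pos (j.isLt)] at this
        convert this using 2 <;> simp
      · refine Or.inr ⟨⟨i - N, by omega⟩, fun j => ?_⟩
        have := hi ⟨(j : ℕ), by omega⟩
        rw [dif_neg h, dif_pos (j.isLt)] at this
        convert this using 2 <;> simp

lemma sa_inter {m : ℕ} {S T : Set (Fin m → ℝ)} (hS : IsSemialgebraic S)
    (hT : IsSemialgebraic T) : IsSemialgebraic (S ∩ T) := by
  obtain ⟨N, M, B, hB, rfl⟩ := hS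
  obtain ⟨N', M', C, hC, rfl⟩ := hT
  refine ⟨N * N', M + M', fun q j =>
    if hj : (j : ℕ) < M then B (finProdFinEquiv.symm q).1 ⟨j, hj⟩
    else C (finProdFinEquiv.symm q).2 ⟨(j : ℕ) - M, by omega⟩, ?_, ?_⟩
  · intro i j
    dsimp only
    split
    · exact hB _ _
    · exact hC _ _
  · ext x
    simp only [mem_inter_iff, mem_iUnion, mem_iInter]
    constructor
    · rintro ⟨⟨i, hi⟩, ⟨k, hk⟩⟩
      refine ⟨finProdFinEquiv (i, k), fun j => ?_⟩
      rw [Equiv.symm_apply_apply]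
      split
      · exact hi _
      · exact hk _
    · rintro ⟨q, hq⟩
      constructor
      · refine ⟨(finProdFinEquiv.symm q).1, fun j => ?_⟩
        have := hq ⟨(j : ℕ), by omega⟩
        rw [dif_pos (show ((⟨(j : ℕ), by omega⟩ : Fin (M + M')) : ℕ) < M from j.isLt)] at this
        exact this
      · refine ⟨(finProdFinEquiv.symm q).2, fun j => ?_⟩
        have := hq ⟨M + (j : ℕ), by omega⟩
        rw [dif_neg (by simp)] at this
        convert this using 2
        ext
        simp

lemma sa_comp {a b : ℕ} (φ : Fin a → Fin b) {S : Set (Fin a → ℝ)}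
    (h : IsSemialgebraic S) :
    IsSemialgebraic {z : Fin b → ℝ | (fun i => z (φ i)) ∈ S} := by
  obtain ⟨N, M, B, hB, rfl⟩ := h
  refine ⟨N, M, fun i j => (fun z : Fin b → ℝ => fun i => z (φ i)) ⁻¹' B i j, ?_, ?_⟩
  · intro i j
    obtain ⟨p, hp | hp⟩ := hB i j
    · exact ⟨MvPolynomial.rename φ p, Or.inl (by ext z; simp [hp, MvPolynomial.eval_rename]; rfl)⟩
    · exact ⟨MvPolynomial.rename φ p, Or.inr (by ext z; simp [hp, MvPolynomial.eval_rename]; rfl)⟩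
  · ext z
    simp only [Set.mem_setOf_eq, Set.mem_iUnion, Set.mem_iInter, Set.mem_preimage]

lemma sa_iInter {m k : ℕ} (f : Fin k → Set (Fin m → ℝ)) (h : ∀ j, IsSemialgebraic (f j)) :
    IsSemialgebraic (⋂ j, f j) := by
  induction k with
  | zero => simpa using sa_univ
  | succ k ih =>
    have : (⋂ j, f j) = f 0 ∩ ⋂ j, f (Fin.succ j) := by
      ext x; simp [Fin.forall_fin_succ]
    rw [this]
    exact sa_inter (h 0) (ih _ fun j => h _)

lemma sa_biUnion {m : ℕ} {ι : Type*} (s : Finset ι) (f : ι → Set (Fin m → ℝ))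
    (h : ∀ y ∈ s, IsSemialgebraic (f y)) : IsSemialgebraic (⋃ y ∈ s, f y) := by
  classical
  induction s using Finset.induction_on with
  | empty => simpa using sa_empty
  | insert _ _ hx ih =>
    rw [Finset.set_biUnion_insert]
    exact sa_union (h _ (Finset.mem_insert_self _ _))
      (ih fun y hy => h y (Finset.mem_insert_of_mem hy))

lemma sa_nonneg {m : ℕ} (p : MvPolynomial (Fin m) ℝ) :
    IsSemialgebraic {x : Fin m → ℝ | 0 ≤ MvPolynomial.eval x p} := by
  have : {x : Fin m → ℝ | 0 ≤ MvPolynomial.eval x p}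
      = {x | 0 < MvPolynomial.eval x p} ∪ {x | MvPolynomial.eval x p = 0} := by
    ext x
    simp only [Set.mem_setOf_eq, Set.mem_union]
    constructor
    · intro h; rcases lt_or_eq_of_le h with h | h
      · exact Or.inl h
      · exact Or.inr h.symm
    · rintro (h | h) <;> simp [le_of_lt, h]
  rw [this]
  exact sa_union (sa_of_basic ⟨p, Or.inr rfl⟩) (sa_of_basic ⟨p, Or.inl rfl⟩)

lemma sa_singleton {m : ℕ} (c : Fin m → ℝ) : IsSemialgebraic ({c} : Set (Fin m → ℝ)) := by
  have : ({c} : Set (Fin m → ℝ))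
      = ⋂ j, {x : Fin m → ℝ | MvPolynomial.eval x (MvPolynomial.X j - MvPolynomial.C (c j)) = 0} := by
    ext x
    simp [funext_iff, sub_eq_zero]
  rw [this]
  exact sa_iInter _ fun j => sa_of_basic ⟨_, Or.inl rfl⟩

lemma sa_closedBall {n : ℕ} (c : Fin n → ℝ) (r : ℝ) (hr : 0 ≤ r) :
    IsSemialgebraic (Metric.closedBall c r) := by
  have : Metric.closedBall c r
      = ⋂ j, {x : Fin n → ℝ | 0 ≤ MvPolynomial.eval x
          (MvPolynomial.C (r ^ 2) - (MvPolynomial.X j - MvPolynomial.C (c j)) ^ 2)} := by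
    ext x
    simp only [Metric.mem_closedBall, Set.mem_iInter, Set.mem_setOf_eq, map_sub, map_pow,
      MvPolynomial.eval_C, MvPolynomial.eval_X]
    rw [dist_pi_le_iff hr]
    refine forall_congr' fun j => ?_
    rw [Real.dist_eq]
    constructor
    · intro h
      nlinarith [abs_nonneg (x j - c j), sq_abs (x j - c j)]
    · intro h
      nlinarith [abs_nonneg (x j - c j), sq_abs (x j - c j)]
  rw [this]
  exact sa_iInter _ fun j => sa_nonneg _

lemma pairSet_inter_snd {m n : ℕ} (A : Set ((Fin m → ℝ) × (Fin n → ℝ)))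
    (L : Set (Fin n → ℝ)) :
    {z : Fin (m + n) → ℝ | ∃ w ∈ A ∩ Prod.snd ⁻¹' L, z = Fin.append w.1 w.2}
      = {z : Fin (m + n) → ℝ | ∃ w ∈ A, z = Fin.append w.1 w.2}
        ∩ {z : Fin (m + n) → ℝ | (fun j => z (Fin.natAdd m j)) ∈ L} := by
  ext z
  simp only [Set.mem_setOf_eq, Set.mem_inter_iff, Set.mem_preimage]
  constructor
  · rintro ⟨w, ⟨hwA, hwL⟩, rfl⟩
    refine ⟨⟨w, hwA, rfl⟩, ?_⟩
    have : (fun j => Fin.append w.1 w.2 (Fin.natAdd m j)) = w.2 := by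
      funext j; exact Fin.append_right _ _ _
    rw [this]; exact hwL
  · rintro ⟨⟨w, hwA, rfl⟩, hL⟩
    refine ⟨w, ⟨hwA, ?_⟩, rfl⟩
    have : (fun j => Fin.append w.1 w.2 (Fin.natAdd m j)) = w.2 := by
      funext j; exact Fin.append_right _ _ _
    rwa [this] at hL

lemma pairSet_prod {m n : ℕ} (X : Set (Fin m → ℝ)) (Y : Set (Fin n → ℝ)) :
    {z : Fin (m + n) → ℝ | ∃ w ∈ X ×ˢ Y, z = Fin.append w.1 w.2}
      = {z : Fin (m + n) → ℝ | (fun i => z (Fin.castAdd n i)) ∈ X}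
        ∩ {z : Fin (m + n) → ℝ | (fun j => z (Fin.natAdd m j)) ∈ Y} := by
  ext z
  simp only [Set.mem_setOf_eq, Set.mem_inter_iff, Set.mem_prod]
  constructor
  · rintro ⟨w, ⟨hw1, hw2⟩, rfl⟩
    constructor
    · have : (fun i => Fin.append w.1 w.2 (Fin.castAdd n i)) = w.1 := by
        funext i; exact Fin.append_left _ _ _
      rw [this]; exact hw1
    · have : (fun j => Fin.append w.1 w.2 (Fin.natAdd m j)) = w.2 := by
        funext j; exact Fin.append_right _ _ _
      rw [this]; exact hw2
  · rintro ⟨h1, h2⟩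
    refine ⟨⟨fun i => z (Fin.castAdd n i), fun j => z (Fin.natAdd m j)⟩, ⟨h1, h2⟩, ?_⟩
    exact (Fin.append_castAdd_natAdd (f := z)).symm

lemma pairSet_biUnion {m n : ℕ} {ι : Type*} (t : Finset ι)
    (f : ι → Set ((Fin m → ℝ) × (Fin n → ℝ))) :
    {z : Fin (m + n) → ℝ | ∃ w ∈ ⋃ y ∈ t, f y, z = Fin.append w.1 w.2}
      = ⋃ y ∈ t, {z : Fin (m + n) → ℝ | ∃ w ∈ f y, z = Fin.append w.1 w.2} := by
  ext z
  constructor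
  · rintro ⟨w, hw, rfl⟩
    obtain ⟨y, hy, hwf⟩ := Set.mem_iUnion₂.1 hw
    exact Set.mem_iUnion₂.2 ⟨y, hy, ⟨w, hwf, rfl⟩⟩
  · intro hz
    obtain ⟨y, hy, w, hwf, hzz⟩ := Set.mem_iUnion₂.1 hz
    exact ⟨w, Set.mem_iUnion₂.2 ⟨y, hy, hwf⟩, hzz⟩

end AuxSA

/-- If `A ⊆ ℝ^m × ℝ^n` is a semialgebraic set that is either open or a
semialgebraic compact, then the coordinate projection `(x, y) ↦ y` covers semialgebraic
compacts on `A`: every semialgebraic compact `L` contained in the projection of `A` is the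
image of a semialgebraic compact `K ⊆ A`. -/
theorem projection_covers_compacts {m n : ℕ} (A : Set ((Fin m → ℝ) × (Fin n → ℝ)))
    (hsa : IsSemialgebraicPair A) (h : IsOpen A ∨ IsSACompactPair A) :
    ∀ L : Set (Fin n → ℝ), IsSACompact L → L ⊆ Prod.snd '' A →
      ∃ K, IsSACompactPair K ∧ K ⊆ A ∧ Prod.snd '' K = L := by
  intro L hL hLsub
  obtain ⟨hLsa, hLclosed, hLbdd⟩ := hL
  rcases h with hopen | ⟨hAsa, hAclosed, hAbdd⟩
  · -- Case: A open
    have hchoice : ∀ y : Fin n → ℝ, ∃ (x : Fin m → ℝ) (r : ℝ), 0 < r ∧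
        (y ∈ L → {x} ×ˢ Metric.closedBall y r ⊆ A) := by
      intro y
      by_cases hy : y ∈ L
      · obtain ⟨w, hwA, hw2⟩ := hLsub hy
        have hA' : (w.1, y) ∈ A := by rw [← hw2]; exact hwA
        obtain ⟨ε, hε, hball⟩ := Metric.isOpen_iff.1 hopen (w.1, y) hA'
        refine ⟨w.1, ε / 2, half_pos hε, fun _ => ?_⟩
        rintro ⟨a, b⟩ ⟨ha, hb⟩
        apply hball
        rw [Metric.mem_ball, Prod.dist_eq]
        simp only [Set.mem_singleton_iff] at ha
        subst ha
        simp only [dist_self]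
        rw [Metric.mem_closedBall] at hb
        have : max 0 (dist b y) ≤ ε / 2 := by
          simp [hb, le_of_lt (half_pos hε)]
        calc max 0 (dist b y) ≤ ε / 2 := this
          _ < ε := half_lt_self hε
      · exact ⟨0, 1, one_pos, fun hy' => absurd hy' hy⟩
    choose X r hr hsub using hchoice
    have hLcpt : IsCompact L := Metric.isCompact_of_isClosed_isBounded hLclosed hLbdd
    obtain ⟨t, htL, hcov⟩ := hLcpt.elim_nhds_subcover (fun y => Metric.ball y (r y / 2))
      (fun y _ => Metric.ball_mem_nhds _ (half_pos (hr y)))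
    set K : Set ((Fin m → ℝ) × (Fin n → ℝ)) :=
      ⋃ y ∈ t, ({X y} ×ˢ (L ∩ Metric.closedBall y (r y / 2))) with hK
    have hKsubA : K ⊆ A := by
      rintro ⟨a, b⟩ hab
      obtain ⟨y, hyt, hmem⟩ := Set.mem_iUnion₂.1 hab
      obtain ⟨ha, hbL, hbB⟩ := hmem
      simp only [Set.mem_singleton_iff] at ha
      subst ha
      apply hsub y (htL y hyt)
      refine ⟨rfl, Metric.closedBall_subset_closedBall (by linarith [hr y]) hbB⟩
    refine ⟨K, ⟨?_, ?_, ?_⟩, hKsubA, ?_⟩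
    · -- semialgebraic pair
      show IsSemialgebraic _
      rw [pairSet_biUnion]
      refine sa_biUnion _ _ fun y hy => ?_
      rw [pairSet_prod]
      exact sa_inter (sa_comp _ (sa_singleton (X y)))
        (sa_comp _ (sa_inter hLsa (sa_closedBall y (r y / 2) (le_of_lt (half_pos (hr y))))))
    · -- closed
      exact Set.Finite.isClosed_biUnion t.finite_toSet fun y _ =>
        isClosed_singleton.prod (hLclosed.inter Metric.isClosed_closedBall)
    · -- bounded
      refine (Bornology.isBounded_biUnion t.finite_toSet).2 fun y _ => ?_
      exact (Bornology.isBounded_singleton.prod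
        (hLbdd.subset Set.inter_subset_left))
    · -- projection
      apply Set.Subset.antisymm
      · rintro _ ⟨⟨a, b⟩, hab, rfl⟩
        obtain ⟨y, hyt, hmem⟩ := Set.mem_iUnion₂.1 hab
        exact hmem.2.1
      · intro y' hy'
        have := hcov hy'
        obtain ⟨y, hyt, hy'ball⟩ := Set.mem_iUnion₂.1 this
        refine ⟨(X y, y'), Set.mem_iUnion₂.2 ⟨y, hyt, ?_⟩, rfl⟩
        exact ⟨rfl, hy', Metric.ball_subset_closedBall hy'ball⟩
  · -- Case: A semialgebraic compact
    refine ⟨A ∩ Prod.snd ⁻¹' L, ⟨?_, ?_, ?_⟩, Set.inter_subset_left, ?_⟩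
    · show IsSemialgebraic _
      rw [pairSet_inter_snd]
      exact sa_inter hsa (sa_comp _ hLsa)
    · exact hAclosed.inter (hLclosed.preimage continuous_snd)
    · exact hAbdd.subset Set.inter_subset_left
    · apply Set.Subset.antisymm
      · rintro _ ⟨w, ⟨hwA, hwL⟩, rfl⟩
        exact hwL
      · intro y hy
        obtain ⟨w, hwA, hw2⟩ := hLsub hy
        exact ⟨w, ⟨hwA, by rw [Set.mem_preimage, hw2]; exact hy⟩, hw2⟩
end
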